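/- arXiv:2205.00863 — 10 statements merged into one kernel-verified Lean document; each statement's English description precedes it below -/
import Mathlib

section
/- Let 0 < a ≤ b be real numbers, λ ∈ (0,1) and q > 1. Then b − (λ a^q + (1−λ) b^q)^{1/q} ≤ (1/q) · b · λ · (1−λ)^{(1/q)−1} · (1 − (a/b)^q). -/
/-!
With `t = (a/b)^q` and `s = λ t + 1 - λ ∈ [1 - λ, 1]`, the left-hand side is `b (1 - s^{1/q})`.
Concavity of `x ↦ x^{1/q}` bounds `1 - s^{1/q}` by its tangent at `s`, namely
`(1/q) s^{1/q - 1} (1 - s)`, and `s^{1/q - 1} ≤ (1 - λ)^{1/q - 1}` since the exponent is negative;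
finally `1 - s = λ (1 - t)`.
-/

open Real

theorem one_sub_rpow_le_mul_rpow_sub_one_mul {p s : ℝ} (hp0 : 0 ≤ p) (hp1 : p ≤ 1) (hs : 0 < s) :
    1 - s ^ p ≤ p * s ^ (p - 1) * (1 - s) := by
  have hinv : 1 + (1 - s) / s = s⁻¹ := by field_simp; ring
  have bernoulli : (1 + (1 - s) / s) ^ p ≤ 1 + p * ((1 - s) / s) :=
    rpow_one_add_le_one_add_mul_self (by rw [le_div_iff₀ hs]; linarith) hp0 hp1
  have hsp : s ^ p * (1 + (1 - s) / s) ^ p = 1 := by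
    rw [hinv, ← mul_rpow hs.le (inv_nonneg.2 hs.le), mul_inv_cancel₀ hs.ne', one_rpow]
  have hsp1 : s ^ (p - 1) = s ^ p / s := rpow_sub_one hs.ne' p
  calc 1 - s ^ p = s ^ p * (1 + (1 - s) / s) ^ p - s ^ p := by rw [hsp]
    _ ≤ s ^ p * (1 + p * ((1 - s) / s)) - s ^ p := by gcongr
    _ = p * s ^ (p - 1) * (1 - s) := by rw [hsp1]; ring

theorem one_sub_rpow_le_of_le {p c s : ℝ} (hp0 : 0 ≤ p) (hp1 : p ≤ 1) (hc : 0 < c) (hcs : c ≤ s)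
    (hs1 : s ≤ 1) : 1 - s ^ p ≤ p * c ^ (p - 1) * (1 - s) :=
  calc 1 - s ^ p ≤ p * s ^ (p - 1) * (1 - s) :=
        one_sub_rpow_le_mul_rpow_sub_one_mul hp0 hp1 (hc.trans_le hcs)
    _ ≤ p * c ^ (p - 1) * (1 - s) := by
        have := rpow_le_rpow_of_nonpos hc hcs (by linarith : p - 1 ≤ 0)
        gcongr

/-- The key elementary inequality in the proof of Proposition 4.1:
for `0 < a ≤ b`, `λ ∈ (0,1)` and `q > 1`,
`b − (λ a^q + (1−λ) b^q)^{1/q} ≤ (1/q) b λ (1−λ)^{1/q−1} (1 − (a/b)^q)`. -/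
theorem stmt_2 (a b lam q : ℝ) (ha : 0 < a) (hab : a ≤ b)
    (hlam : lam ∈ Set.Ioo (0 : ℝ) 1) (hq : 1 < q) :
    b - (lam * a ^ q + (1 - lam) * b ^ q) ^ (1 / q) ≤
      (1 / q) * b * lam * (1 - lam) ^ (1 / q - 1) * (1 - (a / b) ^ q) := by
  obtain ⟨hlam0, hlam1⟩ := hlam
  have hb : 0 < b := ha.trans_le hab
  have hq0 : 0 < q := one_pos.trans hq
  set t := (a / b) ^ q
  have ht0 : 0 ≤ t := by positivity
  have ht1 : t ≤ 1 := rpow_le_one (by positivity) ((div_le_one hb).2 hab) hq0.le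
  have hinner :
      (lam * a ^ q + (1 - lam) * b ^ q) ^ (1 / q) = b * (lam * t + (1 - lam)) ^ (1 / q) := by
    have hat : a ^ q = t * b ^ q := by
      rw [show t = (a / b) ^ q from rfl, div_rpow ha.le hb.le, div_mul_cancel₀ _ (by positivity)]
    rw [hat, show lam * (t * b ^ q) + (1 - lam) * b ^ q = b ^ q * (lam * t + (1 - lam)) by ring,
      mul_rpow (by positivity) (by nlinarith), ← rpow_mul hb.le, mul_one_div_cancel hq0.ne', rpow_one]
  have key := one_sub_rpow_le_of_le (p := 1 / q) (by positivity) ((div_le_one hq0).2 hq.le)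
    (sub_pos.2 hlam1) (show 1 - lam ≤ lam * t + (1 - lam) by nlinarith)
    (show lam * t + (1 - lam) ≤ 1 by nlinarith)
  rw [hinner]
  calc b - b * (lam * t + (1 - lam)) ^ (1 / q)
        = b * (1 - (lam * t + (1 - lam)) ^ (1 / q)) := by ring
    _ ≤ b * (1 / q * (1 - lam) ^ (1 / q - 1) * (1 - (lam * t + (1 - lam)))) := by gcongr
    _ = _ := by ring
end

section
/- Let a, b > 0 be real numbers, λ ∈ (0,1), q > 1, and set r = min{a,b} / max{a,b} ∈ (0,1]. Then max{a,b} − (λ a^q + (1−λ) b^q)^{1/q} ≤ (1/q) · max{a,b} · max{ λ^{(1/q)−1}(1−λ), (1−λ)^{(1/q)−1} λ } · (1 − r^q). -/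
/-!
For `b ≤ a`, put `x = (b/a)^q ∈ [0,1]` and `s = λ + (1-λ)x ∈ [λ,1]`; then the power mean is
`a s^{1/q}`, so the left side is `a (1 - s^{1/q})`. Concavity of `t ↦ t^{1/q}` bounds
`1 - s^{1/q}` by its tangent at `s`, whose slope `(1/q) s^{1/q-1}` is at most `(1/q) λ^{1/q-1}`,
while `1 - s = (1-λ)(1-x)`. The case `a ≤ b` is the same with `λ` replaced by `1 - λ`.
-/

open Real

namespace Real

lemma rpow_sub_rpow_le_mul_rpow_sub_one_mul {p s t : ℝ} (hp0 : 0 ≤ p) (hp1 : p ≤ 1)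
    (hs : 0 < s) (ht : 0 ≤ t) :
    t ^ p - s ^ p ≤ p * s ^ (p - 1) * (t - s) := by
  have bernoulli : (t / s) ^ p ≤ 1 + p * (t / s - 1) := by
    simpa using rpow_one_add_le_one_add_mul_self (s := t / s - 1)
      (by linarith [div_nonneg ht hs.le]) hp0 hp1
  have hts : t ^ p = s ^ p * (t / s) ^ p := by
    rw [div_rpow ht hs.le, mul_div_cancel₀ _ (rpow_pos_of_pos hs p).ne']
  have hslope : s ^ p * (t / s - 1) = s ^ (p - 1) * (t - s) := by
    rw [rpow_sub_one hs.ne']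
    field_simp
  calc t ^ p - s ^ p = s ^ p * (t / s) ^ p - s ^ p := by rw [hts]
    _ ≤ s ^ p * (1 + p * (t / s - 1)) - s ^ p := by gcongr
    _ = p * (s ^ p * (t / s - 1)) := by ring
    _ = p * s ^ (p - 1) * (t - s) := by rw [hslope]; ring

lemma one_sub_rpow_le_mul_rpow_sub_one_mul {p lam s : ℝ} (hp0 : 0 ≤ p) (hp1 : p ≤ 1)
    (hlam : 0 < lam) (hlams : lam ≤ s) (hs1 : s ≤ 1) :
    1 - s ^ p ≤ p * lam ^ (p - 1) * (1 - s) := by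
  have hs : 0 < s := hlam.trans_le hlams
  calc 1 - s ^ p = 1 ^ p - s ^ p := by rw [one_rpow]
    _ ≤ p * s ^ (p - 1) * (1 - s) :=
      rpow_sub_rpow_le_mul_rpow_sub_one_mul hp0 hp1 hs zero_le_one
    _ ≤ p * lam ^ (p - 1) * (1 - s) := by
      have hslope : s ^ (p - 1) ≤ lam ^ (p - 1) := rpow_le_rpow_of_nonpos hlam hlams (by linarith)
      gcongr

end Real

lemma sub_weighted_rpow_mean_le_of_le {a b lam q : ℝ} (ha : 0 < a) (hb : 0 ≤ b) (hba : b ≤ a)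
    (hlam0 : 0 < lam) (hlam1 : lam ≤ 1) (hq : 1 ≤ q) :
    a - (lam * a ^ q + (1 - lam) * b ^ q) ^ (1 / q) ≤
      1 / q * a * (lam ^ (1 / q - 1) * (1 - lam)) * (1 - (b / a) ^ q) := by
  have hq0 : 0 < q := one_pos.trans_le hq
  set x := (b / a) ^ q with hx
  set s := lam + (1 - lam) * x with hs
  have hx0 : 0 ≤ x := by positivity
  have hx1 : x ≤ 1 := rpow_le_one (by positivity) ((div_le_one ha).2 hba) hq0.le
  have hmean : lam * a ^ q + (1 - lam) * b ^ q = a ^ q * s := by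
    rw [hs, hx, div_rpow hb ha.le]
    field_simp
  have hroot : (lam * a ^ q + (1 - lam) * b ^ q) ^ (1 / q) = a * s ^ (1 / q) := by
    rw [hmean, mul_rpow (by positivity) (by positivity), ← rpow_mul ha.le, mul_one_div_cancel
      hq0.ne', rpow_one]
  have htangent : 1 - s ^ (1 / q) ≤ 1 / q * lam ^ (1 / q - 1) * (1 - s) :=
    one_sub_rpow_le_mul_rpow_sub_one_mul (by positivity) ((div_le_one hq0).2 hq) hlam0
      (by nlinarith) (by nlinarith)
  calc a - (lam * a ^ q + (1 - lam) * b ^ q) ^ (1 / q) = a * (1 - s ^ (1 / q)) := by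
        rw [hroot]; ring
    _ ≤ a * (1 / q * lam ^ (1 / q - 1) * (1 - s)) := by gcongr
    _ = 1 / q * a * (lam ^ (1 / q - 1) * (1 - lam)) * (1 - x) := by rw [hs]; ring

/-- The symmetric form of the key elementary inequality in the proof of
Proposition 4.1: for `a, b > 0`, `λ ∈ (0,1)`, `q > 1` and `r = min{a,b}/max{a,b}`,
`max{a,b} − (λ a^q + (1−λ) b^q)^{1/q}
  ≤ (1/q) max{a,b} max{λ^{1/q−1}(1−λ), (1−λ)^{1/q−1} λ} (1 − r^q)`. -/
theorem stmt_3 (a b lam q : ℝ) (ha : 0 < a) (hb : 0 < b)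
    (hlam : lam ∈ Set.Ioo (0 : ℝ) 1) (hq : 1 < q) :
    max a b - (lam * a ^ q + (1 - lam) * b ^ q) ^ (1 / q) ≤
      (1 / q) * max a b *
        max (lam ^ (1 / q - 1) * (1 - lam)) ((1 - lam) ^ (1 / q - 1) * lam) *
        (1 - (min a b / max a b) ^ q) := by
  obtain ⟨hlam0, hlam1⟩ := hlam
  have hq0 : 0 < q := one_pos.trans hq
  rcases le_total b a with hba | hab
  · rw [max_eq_left hba, min_eq_right hba]
    have hratio : (b / a) ^ q ≤ 1 := rpow_le_one (by positivity) ((div_le_one ha).2 hba) hq0.le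
    calc _ ≤ 1 / q * a * (lam ^ (1 / q - 1) * (1 - lam)) * (1 - (b / a) ^ q) :=
          sub_weighted_rpow_mean_le_of_le ha hb.le hba hlam0 hlam1.le hq.le
      _ ≤ _ := by
        gcongr
        exact le_max_left _ _
  · rw [max_eq_right hab, min_eq_left hab, add_comm]
    have hratio : (a / b) ^ q ≤ 1 := rpow_le_one (by positivity) ((div_le_one hb).2 hab) hq0.le
    have hswap := sub_weighted_rpow_mean_le_of_le hb ha.le hab (sub_pos.2 hlam1)
      (sub_le_self 1 hlam0.le) hq.le
    rw [sub_sub_cancel] at hswap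
    calc _ ≤ 1 / q * b * ((1 - lam) ^ (1 / q - 1) * lam) * (1 - (a / b) ^ q) := hswap
      _ ≤ _ := by
        gcongr
        exact le_max_right _ _
end

section
/- Fix λ ∈ (0,1). There exists a constant C > 0, depending only on λ, with the following property: for every c₀ > 0, every function u : ℝⁿ × [0,∞) → ℝ with u(x,t) ≥ c₀ for all (x,t), every q > 1 and every (x,t) ∈ ℝⁿ × [0,∞), one has 0 ≤ u_{⋆,λ}(x,t) − u_{q,λ}(x,t) ≤ (C/q) · ( u_{⋆,λ}(x,t) + 1 ). -/
/-!
For `a, b ≥ 0` and `μ = min λ (1 - λ)`, the weighted power mean satisfies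
`μ ^ (1/q) · max a b ≤ (λ a^q + (1-λ) b^q) ^ (1/q) ≤ max a b`.
Taking infima over the decompositions `x = λ y + (1-λ) z` gives
`μ ^ (1/q) · u_{⋆,λ} ≤ u_{q,λ} ≤ u_{⋆,λ}`, and `1 - μ ^ (1/q) ≤ -log μ / q`
by `1 + s ≤ exp s`; so `C = -log μ` works.
-/

open Filter Topology

/-- The spatially quasiconvex envelope `u_{⋆,λ}` of `u`. -/
noncomputable def qcEnv {n : ℕ} (lam : ℝ) (u : EuclideanSpace ℝ (Fin n) → ℝ → ℝ)
    (x : EuclideanSpace ℝ (Fin n)) (t : ℝ) : ℝ :=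
  sInf {m : ℝ | ∃ y z : EuclideanSpace ℝ (Fin n),
    lam • y + (1 - lam) • z = x ∧ m = max (u y t) (u z t)}

/-- The spatially power convex envelope `u_{q,λ}` of `u`. -/
noncomputable def pcEnv {n : ℕ} (lam q : ℝ) (u : EuclideanSpace ℝ (Fin n) → ℝ → ℝ)
    (x : EuclideanSpace ℝ (Fin n)) (t : ℝ) : ℝ :=
  sInf {m : ℝ | ∃ y z : EuclideanSpace ℝ (Fin n),
    lam • y + (1 - lam) • z = x ∧
    m = (lam * (u y t) ^ q + (1 - lam) * (u z t) ^ q) ^ (1 / q)}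

open Real

section PowerMean

variable {lam q a b : ℝ}

lemma weighted_rpow_mean_le_max (hl0 : 0 ≤ lam) (hl1 : lam ≤ 1) (hq : 0 < q)
    (ha : 0 ≤ a) (hb : 0 ≤ b) :
    (lam * a ^ q + (1 - lam) * b ^ q) ^ (1 / q) ≤ max a b := by
  have hsum : lam * a ^ q + (1 - lam) * b ^ q ≤ max a b ^ q := by
    have haM := rpow_le_rpow ha (le_max_left a b) hq.le
    have hbM := rpow_le_rpow hb (le_max_right a b) hq.le
    nlinarith
  calc (lam * a ^ q + (1 - lam) * b ^ q) ^ (1 / q)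
      ≤ (max a b ^ q) ^ (1 / q) :=
        rpow_le_rpow (add_nonneg (mul_nonneg hl0 (rpow_nonneg ha q))
          (mul_nonneg (sub_nonneg.2 hl1) (rpow_nonneg hb q))) hsum (by positivity)
    _ = max a b := by rw [one_div, rpow_rpow_inv (le_max_of_le_left ha) hq.ne']

lemma min_rpow_mul_max_le_weighted_rpow_mean (hl0 : 0 ≤ lam) (hl1 : lam ≤ 1) (hq : 0 < q)
    (ha : 0 ≤ a) (hb : 0 ≤ b) :
    min lam (1 - lam) ^ (1 / q) * max a b ≤ (lam * a ^ q + (1 - lam) * b ^ q) ^ (1 / q) := by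
  set μ := min lam (1 - lam)
  have hμ : 0 ≤ μ := le_min hl0 (sub_nonneg.2 hl1)
  have haq := rpow_nonneg ha q
  have hbq := rpow_nonneg hb q
  have hsum : μ * max a b ^ q ≤ lam * a ^ q + (1 - lam) * b ^ q := by
    have hμl : μ ≤ lam := min_le_left _ _
    have hμr : μ ≤ 1 - lam := min_le_right _ _
    rcases le_total a b with hab | hab
    · rw [max_eq_right hab]; nlinarith
    · rw [max_eq_left hab]; nlinarith
  calc μ ^ (1 / q) * max a b = (μ * max a b ^ q) ^ (1 / q) := by
        rw [mul_rpow hμ (rpow_nonneg (le_max_of_le_left ha) q), one_div,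
          rpow_rpow_inv (le_max_of_le_left ha) hq.ne']
    _ ≤ (lam * a ^ q + (1 - lam) * b ^ q) ^ (1 / q) :=
        rpow_le_rpow (mul_nonneg hμ (rpow_nonneg (le_max_of_le_left ha) q)) hsum (by positivity)

end PowerMean

lemma one_sub_rpow_le_neg_mul_log {x : ℝ} (hx : 0 < x) (s : ℝ) : 1 - x ^ s ≤ -(s * log x) := by
  have := add_one_le_exp (log x * s)
  rw [rpow_def_of_pos hx]
  linarith [mul_comm s (log x)]

lemma mul_sInf_le_sInf_of_mul_le {α β : Type*} {P : α → β → Prop} {f g : α → β → ℝ} {c : ℝ}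
    (hP : ∃ y z, P y z) (hc : 0 ≤ c) (hf : ∀ y z, 0 ≤ f y z)
    (hfg : ∀ y z, P y z → c * f y z ≤ g y z) :
    c * sInf {m | ∃ y z, P y z ∧ m = f y z} ≤ sInf {m | ∃ y z, P y z ∧ m = g y z} := by
  obtain ⟨y₀, z₀, h₀⟩ := hP
  refine le_csInf ⟨_, y₀, z₀, h₀, rfl⟩ ?_
  rintro _ ⟨y, z, hyz, rfl⟩
  have hbdd : BddBelow {m | ∃ y z, P y z ∧ m = f y z} :=
    ⟨0, by rintro _ ⟨y, z, -, rfl⟩; exact hf y z⟩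
  exact (mul_le_mul_of_nonneg_left (csInf_le hbdd ⟨y, z, hyz, rfl⟩) hc).trans (hfg y z hyz)

lemma exists_combo_eq {E : Type*} [AddCommGroup E] [Module ℝ E] (lam : ℝ) (x : E) :
    ∃ y z : E, lam • y + (1 - lam) • z = x :=
  ⟨x, x, Convex.combo_self (add_sub_cancel lam 1) x⟩

section Envelopes

variable {n : ℕ} {lam q : ℝ} {u : EuclideanSpace ℝ (Fin n) → ℝ → ℝ}
  {x : EuclideanSpace ℝ (Fin n)} {t : ℝ}

lemma qcEnv_nonneg (hu : ∀ y, 0 ≤ u y t) : 0 ≤ qcEnv lam u x t :=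
  Real.sInf_nonneg (by rintro _ ⟨y, z, -, rfl⟩; exact le_max_of_le_left (hu y))

lemma pcEnv_le_qcEnv (hl0 : 0 ≤ lam) (hl1 : lam ≤ 1) (hq : 0 < q) (hu : ∀ y, 0 ≤ u y t) :
    pcEnv lam q u x t ≤ qcEnv lam u x t :=
  (one_mul _).symm.trans_le <| mul_sInf_le_sInf_of_mul_le (exists_combo_eq lam x) zero_le_one
    (fun y z => rpow_nonneg (add_nonneg (mul_nonneg hl0 (rpow_nonneg (hu y) q))
      (mul_nonneg (sub_nonneg.2 hl1) (rpow_nonneg (hu z) q))) _)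
    (fun y z _ => (one_mul _).trans_le (weighted_rpow_mean_le_max hl0 hl1 hq (hu y) (hu z)))

lemma min_rpow_mul_qcEnv_le_pcEnv (hl0 : 0 ≤ lam) (hl1 : lam ≤ 1) (hq : 0 < q)
    (hu : ∀ y, 0 ≤ u y t) :
    min lam (1 - lam) ^ (1 / q) * qcEnv lam u x t ≤ pcEnv lam q u x t :=
  mul_sInf_le_sInf_of_mul_le (exists_combo_eq lam x)
    (rpow_nonneg (le_min hl0 (sub_nonneg.2 hl1)) _)
    (fun y _ => le_max_of_le_left (hu y))
    (fun y z _ => min_rpow_mul_max_le_weighted_rpow_mean hl0 hl1 hq (hu y) (hu z))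

end Envelopes

/-- The quantitative estimate in the proof of Proposition 4.1: for fixed `λ ∈ (0,1)`
there is `C > 0` depending only on `λ` such that for every uniformly positive `u`,
every `q > 1` and every `(x,t)`,
`0 ≤ u_{⋆,λ}(x,t) − u_{q,λ}(x,t) ≤ (C/q)(u_{⋆,λ}(x,t) + 1)`. -/
theorem stmt_4 (lam : ℝ) (hlam : lam ∈ Set.Ioo (0 : ℝ) 1) :
    ∃ C > (0 : ℝ), ∀ (n : ℕ) (c₀ : ℝ), 0 < c₀ →
      ∀ u : EuclideanSpace ℝ (Fin n) → ℝ → ℝ,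
        (∀ x t, 0 ≤ t → c₀ ≤ u x t) →
        ∀ q : ℝ, 1 < q → ∀ (x : EuclideanSpace ℝ (Fin n)) (t : ℝ), 0 ≤ t →
          0 ≤ qcEnv lam u x t - pcEnv lam q u x t ∧
          qcEnv lam u x t - pcEnv lam q u x t ≤ (C / q) * (qcEnv lam u x t + 1) := by
  obtain ⟨hl0, hl1⟩ := hlam
  set μ := min lam (1 - lam)
  have hμ0 : 0 < μ := lt_min hl0 (sub_pos.2 hl1)
  have hC : 0 < -log μ := neg_pos.2 (log_neg hμ0 ((min_le_left _ _).trans_lt hl1))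
  refine ⟨-log μ, hC, fun n c₀ hc₀ u hu q hq x t ht => ?_⟩
  have hq0 : 0 < q := one_pos.trans hq
  have hu0 : ∀ y, 0 ≤ u y t := fun y => hc₀.le.trans (hu y t ht)
  have hupper := pcEnv_le_qcEnv (x := x) hl0.le hl1.le hq0 hu0
  have hlower := min_rpow_mul_qcEnv_le_pcEnv (x := x) hl0.le hl1.le hq0 hu0
  have hqc := qcEnv_nonneg (lam := lam) (x := x) hu0
  have hgap : 1 - μ ^ (1 / q) ≤ -log μ / q := by
    simpa [neg_div, div_eq_inv_mul] using one_sub_rpow_le_neg_mul_log hμ0 (1 / q)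
  refine ⟨sub_nonneg.2 hupper, ?_⟩
  calc qcEnv lam u x t - pcEnv lam q u x t ≤ (1 - μ ^ (1 / q)) * qcEnv lam u x t := by
        linarith
    _ ≤ (-log μ / q) * qcEnv lam u x t := mul_le_mul_of_nonneg_right hgap hqc
    _ ≤ (-log μ / q) * (qcEnv lam u x t + 1) :=
        mul_le_mul_of_nonneg_left (by linarith) (div_pos hC hq0).le
end

section
/- Let u : ℝⁿ × [0,∞) → ℝ be continuous and coercive in space, i.e. for every T ≥ 0, inf{ u(x,t) : |x| ≥ R, 0 ≤ t ≤ T } → ∞ as R → ∞. Fix λ ∈ (0,1). Then the spatially quasiconvex envelope u_{⋆,λ} is lower semicontinuous on ℝⁿ × [0,∞). -/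
open Filter Topology

private lemma slice_bound {n : ℕ}
    (u : EuclideanSpace ℝ (Fin n) → ℝ → ℝ)
    (hu : ContinuousOn (fun p : EuclideanSpace ℝ (Fin n) × ℝ => u p.1 p.2)
      {p : EuclideanSpace ℝ (Fin n) × ℝ | 0 ≤ p.2})
    (hcoer : ∀ T : ℝ, 0 ≤ T → ∀ M : ℝ, ∃ R : ℝ, ∀ (x : EuclideanSpace ℝ (Fin n)) (t : ℝ),
      R ≤ ‖x‖ → 0 ≤ t → t ≤ T → M ≤ u x t)
    (t : ℝ) (ht : 0 ≤ t) : ∃ B : ℝ, ∀ y, B ≤ u y t := by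
  obtain ⟨R, hR⟩ := hcoer t ht 0
  set K : Set (EuclideanSpace ℝ (Fin n) × ℝ) :=
    Metric.closedBall 0 |R| ×ˢ {t} with hK
  have hKc : IsCompact K := (isCompact_closedBall _ _).prod isCompact_singleton
  have hKs : K ⊆ {p : EuclideanSpace ℝ (Fin n) × ℝ | 0 ≤ p.2} := by
    rintro ⟨a, s⟩ ⟨-, hs⟩
    simp only [Set.mem_singleton_iff] at hs
    simpa [hs] using ht
  have hKne : K.Nonempty := ⟨(0, t), by simp [hK, abs_nonneg]⟩
  obtain ⟨p0, hp0K, hp0min⟩ := hKc.exists_isMinOn hKne (hu.mono hKs)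
  refine ⟨min (u p0.1 p0.2) 0, fun y => ?_⟩
  rcases le_or_gt ‖y‖ |R| with h | h
  · have hmem : ((y, t) : EuclideanSpace ℝ (Fin n) × ℝ) ∈ K := by
      simp [hK, mem_closedBall_zero_iff, h]
    exact le_trans (min_le_left _ _) (hp0min hmem)
  · exact le_trans (min_le_right _ _) (hR y t (le_trans (le_abs_self R) h.le) ht le_rfl)

/-- Lower semicontinuity of the spatially quasiconvex envelope `u_{⋆,λ}` on
`ℝⁿ × [0,∞)` for continuous, spatially coercive `u` (proof of Lemma 4.2). -/
theorem stmt_8 {n : ℕ}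
    (u : EuclideanSpace ℝ (Fin n) → ℝ → ℝ)
    (hu : ContinuousOn (fun p : EuclideanSpace ℝ (Fin n) × ℝ => u p.1 p.2)
      {p : EuclideanSpace ℝ (Fin n) × ℝ | 0 ≤ p.2})
    (hcoer : ∀ T : ℝ, 0 ≤ T → ∀ M : ℝ, ∃ R : ℝ, ∀ (x : EuclideanSpace ℝ (Fin n)) (t : ℝ),
      R ≤ ‖x‖ → 0 ≤ t → t ≤ T → M ≤ u x t)
    (lam : ℝ) (hlam : lam ∈ Set.Ioo (0 : ℝ) 1) :
    LowerSemicontinuousOn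
      (fun p : EuclideanSpace ℝ (Fin n) × ℝ => qcEnv lam u p.1 p.2)
      {p : EuclideanSpace ℝ (Fin n) × ℝ | 0 ≤ p.2} := by
  intro p hp c hc
  simp only [Set.mem_setOf_eq] at hp
  by_contra hcon
  rw [Filter.not_eventually] at hcon
  obtain ⟨q, hqt, hq⟩ := Filter.exists_seq_forall_of_frequently hcon
  simp only [not_lt] at hq
  -- near-minimizing pairs
  have hsel : ∀ k : ℕ, ∃ y z : EuclideanSpace ℝ (Fin n),
      lam • y + (1 - lam) • z = (q k).1 ∧
      max (u y (q k).2) (u z (q k).2) < c + 1 / ((k : ℝ) + 1) := by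
    intro k
    set S := {m : ℝ | ∃ y z : EuclideanSpace ℝ (Fin n),
      lam • y + (1 - lam) • z = (q k).1 ∧ m = max (u y (q k).2) (u z (q k).2)} with hS
    have hSne : S.Nonempty := by
      refine ⟨_, (q k).1, (q k).1, ?_, rfl⟩
      rw [← add_smul]
      norm_num
    have hck : c < c + 1 / ((k : ℝ) + 1) := by
      have : (0:ℝ) < 1 / ((k : ℝ) + 1) := by positivity
      linarith
    have hmain : ∃ m ∈ S, m < c + 1 / ((k : ℝ) + 1) := by
      by_cases hB : BddBelow S
      · exact (csInf_lt_iff hB hSne).mp (lt_of_le_of_lt (hq k) hck)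
      · obtain ⟨m, hm, hm'⟩ := not_bddBelow_iff.mp hB (c + 1 / ((k : ℝ) + 1))
        exact ⟨m, hm, hm'⟩
    obtain ⟨m, ⟨y, z, hyzk, rfl⟩, hm⟩ := hmain
    exact ⟨y, z, hyzk, hm⟩
  choose y z hyz hlt using hsel
  have hqmem : ∀ᶠ k in atTop, q k ∈ {p : EuclideanSpace ℝ (Fin n) × ℝ | 0 ≤ p.2} :=
    eventually_mem_of_tendsto_nhdsWithin hqt
  have hqn : Tendsto q atTop (𝓝 p) := hqt.mono_right nhdsWithin_le_nhds
  have hqn1 : Tendsto (fun k => (q k).1) atTop (𝓝 p.1) := (continuous_fst.tendsto p).comp hqn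
  have hqn2 : Tendsto (fun k => (q k).2) atTop (𝓝 p.2) := (continuous_snd.tendsto p).comp hqn
  obtain ⟨R, hR⟩ := hcoer (p.2 + 1) (by linarith) (c + 2)
  have hTlt : ∀ᶠ k in atTop, (q k).2 ≤ p.2 + 1 :=
    (hqn2.eventually_lt_const (by linarith : p.2 < p.2 + 1)).mono fun k h => h.le
  have hball : ∀ᶠ k in atTop, 0 ≤ (q k).2 ∧ (q k).2 ≤ p.2 + 1 ∧
      ‖y k‖ ≤ |R| ∧ ‖z k‖ ≤ |R| := by
    filter_upwards [hqmem, hTlt] with k h0 h1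
    have h0' : 0 ≤ (q k).2 := h0
    have hone : c + 1 / ((k : ℝ) + 1) ≤ c + 1 := by
      have hk1 : (0:ℝ) < (k : ℝ) + 1 := by positivity
      have : 1 / ((k : ℝ) + 1) ≤ 1 := by
        rw [div_le_one hk1]
        have : (0:ℝ) ≤ (k : ℝ) := Nat.cast_nonneg k
        linarith
      linarith
    refine ⟨h0', h1, ?_, ?_⟩
    · by_contra h
      push_neg at h
      have h2 := hR (y k) (q k).2 (le_trans (le_abs_self R) h.le) h0' h1
      have h3 := le_max_left (u (y k) (q k).2) (u (z k) (q k).2)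
      have h4 := hlt k
      linarith
    · by_contra h
      push_neg at h
      have h2 := hR (z k) (q k).2 (le_trans (le_abs_self R) h.le) h0' h1
      have h3 := le_max_right (u (y k) (q k).2) (u (z k) (q k).2)
      have h4 := hlt k
      linarith
  obtain ⟨N, hN⟩ := eventually_atTop.mp hball
  have hcomp := isCompact_closedBall (0 : EuclideanSpace ℝ (Fin n)) |R|
  have hYmem : ∀ k : ℕ, y (k + N) ∈ Metric.closedBall (0 : EuclideanSpace ℝ (Fin n)) |R| := by
    intro k
    rw [mem_closedBall_zero_iff]
    exact (hN (k + N) (Nat.le_add_left N k)).2.2.1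
  obtain ⟨y₀, -, φ, hφ, hYt⟩ := hcomp.tendsto_subseq hYmem
  have hZmem : ∀ k : ℕ, z (φ k + N) ∈ Metric.closedBall (0 : EuclideanSpace ℝ (Fin n)) |R| := by
    intro k
    rw [mem_closedBall_zero_iff]
    exact (hN (φ k + N) (Nat.le_add_left N _)).2.2.2
  obtain ⟨z₀, -, ψ, hψ, hZt⟩ := hcomp.tendsto_subseq hZmem
  set σ : ℕ → ℕ := fun k => φ (ψ k) + N with hσdef
  have hσk : ∀ k, k ≤ σ k := fun k =>
    le_trans (le_trans (hψ.le_apply) (hφ.le_apply)) (Nat.le_add_right _ N)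
  have hσ : Tendsto σ atTop atTop := tendsto_atTop_mono hσk tendsto_id
  have hY' : Tendsto (fun k => y (σ k)) atTop (𝓝 y₀) := hYt.comp hψ.tendsto_atTop
  have hZ' : Tendsto (fun k => z (σ k)) atTop (𝓝 z₀) := hZt
  have hx : Tendsto (fun k => (q (σ k)).1) atTop (𝓝 p.1) := hqn1.comp hσ
  have ht' : Tendsto (fun k => (q (σ k)).2) atTop (𝓝 p.2) := hqn2.comp hσ
  have hcombo : Tendsto (fun k => lam • y (σ k) + (1 - lam) • z (σ k)) atTop
      (𝓝 (lam • y₀ + (1 - lam) • z₀)) := (hY'.const_smul lam).add (hZ'.const_smul (1 - lam))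
  have heq : lam • y₀ + (1 - lam) • z₀ = p.1 := by
    refine tendsto_nhds_unique ?_ hx
    simpa only [hyz] using hcombo
  have hPk : ∀ k, 0 ≤ (q (σ k)).2 := fun k => (hN (σ k) (Nat.le_add_left N _)).1
  have hlim : ∀ (w : ℕ → EuclideanSpace ℝ (Fin n)) (w₀ : EuclideanSpace ℝ (Fin n)),
      Tendsto w atTop (𝓝 w₀) →
      Tendsto (fun k => u (w k) ((q (σ k)).2)) atTop (𝓝 (u w₀ p.2)) := by
    intro w w₀ hw
    have hcw : ContinuousWithinAt (fun p : EuclideanSpace ℝ (Fin n) × ℝ => u p.1 p.2)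
        {p : EuclideanSpace ℝ (Fin n) × ℝ | 0 ≤ p.2} (w₀, p.2) := hu _ hp
    have hpair : Tendsto (fun k => ((w k, (q (σ k)).2) : EuclideanSpace ℝ (Fin n) × ℝ)) atTop
        (𝓝[{p : EuclideanSpace ℝ (Fin n) × ℝ | 0 ≤ p.2}] (w₀, p.2)) :=
      tendsto_nhdsWithin_of_tendsto_nhds_of_eventually_within _
        (hw.prodMk_nhds ht') (Eventually.of_forall fun k => hPk k)
    exact hcw.tendsto.comp hpair
  have hbdy : ∀ k, u (y (σ k)) ((q (σ k)).2) ≤ c + 1 / ((k : ℝ) + 1) := by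
    intro k
    have h1 := hlt (σ k)
    have h2 : (1:ℝ) / ((σ k : ℝ) + 1) ≤ 1 / ((k : ℝ) + 1) := by
      apply one_div_le_one_div_of_le (by positivity)
      have := hσk k
      exact_mod_cast by exact_mod_cast add_le_add_left (Nat.cast_le.mpr this) 1
    have h3 := le_max_left (u (y (σ k)) ((q (σ k)).2)) (u (z (σ k)) ((q (σ k)).2))
    linarith
  have hbdz : ∀ k, u (z (σ k)) ((q (σ k)).2) ≤ c + 1 / ((k : ℝ) + 1) := by
    intro k
    have h1 := hlt (σ k)
    have h2 : (1:ℝ) / ((σ k : ℝ) + 1) ≤ 1 / ((k : ℝ) + 1) := by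
      apply one_div_le_one_div_of_le (by positivity)
      have := hσk k
      exact_mod_cast by exact_mod_cast add_le_add_left (Nat.cast_le.mpr this) 1
    have h3 := le_max_right (u (y (σ k)) ((q (σ k)).2)) (u (z (σ k)) ((q (σ k)).2))
    linarith
  have hcc : Tendsto (fun k : ℕ => c + 1 / ((k : ℝ) + 1)) atTop (𝓝 c) := by
    have := tendsto_one_div_add_atTop_nhds_zero_nat (𝕜 := ℝ)
    simpa using (tendsto_const_nhds (x := c) (f := atTop)).add this
  have hy₀ : u y₀ p.2 ≤ c :=
    le_of_tendsto_of_tendsto' (hlim (fun k => y (σ k)) y₀ hY') hcc hbdy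
  have hz₀ : u z₀ p.2 ≤ c :=
    le_of_tendsto_of_tendsto' (hlim (fun k => z (σ k)) z₀ hZ') hcc hbdz
  -- the envelope at p is at most c : contradiction
  obtain ⟨B, hB⟩ := slice_bound u hu hcoer p.2 hp
  have hBdd : BddBelow {m : ℝ | ∃ y' z' : EuclideanSpace ℝ (Fin n),
      lam • y' + (1 - lam) • z' = p.1 ∧ m = max (u y' p.2) (u z' p.2)} := by
    refine ⟨B, ?_⟩
    rintro m ⟨y', z', -, rfl⟩
    exact le_trans (hB y') (le_max_left _ _)
  have hle : qcEnv lam u p.1 p.2 ≤ max (u y₀ p.2) (u z₀ p.2) :=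
    csInf_le hBdd ⟨y₀, z₀, heq, rfl⟩
  have : qcEnv lam u p.1 p.2 ≤ c := le_trans hle (max_le hy₀ hz₀)
  exact absurd hc (not_lt.mpr this)
end

section
/- Let u : ℝⁿ × [0,∞) → ℝ be continuous, satisfy u ≥ c₀ for some constant c₀ > 0, and be coercive in space, i.e. for every T ≥ 0, inf{ u(x,t) : |x| ≥ R, 0 ≤ t ≤ T } → ∞ as R → ∞. Fix λ ∈ (0,1) and q > 1. Then the spatially power convex envelope u_{q,λ} is lower semicontinuous on ℝⁿ × [0,∞). -/
open Filter Topology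

/-- Auxiliary: lower semicontinuity of the envelope for a globally defined,
globally continuous, uniformly positive, coercive `v`. -/
theorem pcEnv_lsc_aux {n : ℕ} (c₀ : ℝ) (hc₀ : 0 < c₀)
    (v : EuclideanSpace ℝ (Fin n) → ℝ → ℝ)
    (hv : Continuous (fun p : EuclideanSpace ℝ (Fin n) × ℝ => v p.1 p.2))
    (hpos : ∀ x t, c₀ ≤ v x t)
    (hcoer : ∀ T : ℝ, 0 < T → ∀ M : ℝ, ∃ R : ℝ, ∀ (x : EuclideanSpace ℝ (Fin n)) (t : ℝ),
      R ≤ ‖x‖ → t ≤ T → M ≤ v x t)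
    (lam q : ℝ) (hlam : lam ∈ Set.Ioo (0 : ℝ) 1) (hq : 1 < q) :
    LowerSemicontinuous
      (fun p : EuclideanSpace ℝ (Fin n) × ℝ => pcEnv lam q v p.1 p.2) := by
  obtain ⟨hlam0, hlam1⟩ := hlam
  have h1lam : 0 < 1 - lam := by linarith
  have hq0 : 0 < q := by linarith
  -- the set whose infimum defines the envelope
  set S : EuclideanSpace ℝ (Fin n) × ℝ → Set ℝ := fun p =>
    {m : ℝ | ∃ y z : EuclideanSpace ℝ (Fin n),
      lam • y + (1 - lam) • z = p.1 ∧
      m = (lam * (v y p.2) ^ q + (1 - lam) * (v z p.2) ^ q) ^ (1 / q)} with hS_def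
  have hpcEnv : ∀ p : EuclideanSpace ℝ (Fin n) × ℝ,
      pcEnv lam q v p.1 p.2 = sInf (S p) := fun p => rfl
  -- parametrization of the set by `y` only
  set g : (EuclideanSpace ℝ (Fin n) × ℝ) × EuclideanSpace ℝ (Fin n) → ℝ := fun w =>
    (lam * (v w.2 w.1.2) ^ q +
      (1 - lam) * (v ((1 - lam)⁻¹ • (w.1.1 - lam • w.2)) w.1.2) ^ q) ^ (1 / q) with hg_def
  have hg_mem : ∀ (p : EuclideanSpace ℝ (Fin n) × ℝ) (y : EuclideanSpace ℝ (Fin n)),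
      g (p, y) ∈ S p := by
    intro p y
    refine ⟨y, (1 - lam)⁻¹ • (p.1 - lam • y), ?_, rfl⟩
    rw [smul_smul, mul_inv_cancel₀ h1lam.ne', one_smul]
    abel
  have hmem_g : ∀ (p : EuclideanSpace ℝ (Fin n) × ℝ), ∀ m ∈ S p,
      ∃ y : EuclideanSpace ℝ (Fin n), m = g (p, y) := by
    rintro p m ⟨y, z, hyz, rfl⟩
    refine ⟨y, ?_⟩
    have hz : z = (1 - lam)⁻¹ • (p.1 - lam • y) := by
      rw [← hyz]
      rw [add_sub_cancel_left, smul_smul, inv_mul_cancel₀ h1lam.ne', one_smul]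
    rw [hg_def]
    simp only [← hz]
  -- every element of `S p` is nonnegative
  have hSnonneg : ∀ (p : EuclideanSpace ℝ (Fin n) × ℝ), ∀ m ∈ S p, (0:ℝ) ≤ m := by
    rintro p m ⟨y, z, -, rfl⟩
    have hy : (0:ℝ) ≤ v y p.2 := le_trans hc₀.le (hpos _ _)
    have hz : (0:ℝ) ≤ v z p.2 := le_trans hc₀.le (hpos _ _)
    exact Real.rpow_nonneg (add_nonneg (mul_nonneg hlam0.le (Real.rpow_nonneg hy q))
      (mul_nonneg h1lam.le (Real.rpow_nonneg hz q))) _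
  have hSbdd : ∀ p : EuclideanSpace ℝ (Fin n) × ℝ, BddBelow (S p) :=
    fun p => ⟨0, fun m hm => hSnonneg p m hm⟩
  have hSne : ∀ p : EuclideanSpace ℝ (Fin n) × ℝ, (S p).Nonempty := by
    intro p
    refine ⟨_, p.1, p.1, ?_, rfl⟩
    have h : lam + (1 - lam) = 1 := by ring
    rw [← add_smul, h, one_smul]
  -- key lower bound when the first value of `v` is large
  have hlb : ∀ (M a c : ℝ), 0 < M → M ≤ a → c₀ ≤ c →
      lam ^ (1/q) * M ≤ (lam * a ^ q + (1 - lam) * c ^ q) ^ (1/q) := by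
    intro M a c hM ha hc
    have h1 : lam * M ^ q ≤ lam * a ^ q + (1 - lam) * c ^ q := by
      have h2 : M ^ q ≤ a ^ q := Real.rpow_le_rpow hM.le ha hq0.le
      have h3 : (0:ℝ) ≤ (1 - lam) * c ^ q :=
        mul_nonneg h1lam.le (Real.rpow_nonneg (le_trans hc₀.le hc) q)
      nlinarith
    have h4 : (lam * M ^ q) ^ (1/q) ≤ (lam * a ^ q + (1 - lam) * c ^ q) ^ (1/q) :=
      Real.rpow_le_rpow (by positivity) h1 (by positivity)
    calc lam ^ (1/q) * M = (lam * M ^ q) ^ (1/q) := by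
          rw [Real.mul_rpow hlam0.le (Real.rpow_nonneg hM.le q),
            ← Real.rpow_mul hM.le, mul_one_div_cancel hq0.ne', Real.rpow_one]
      _ ≤ _ := h4
  -- now the lower semicontinuity
  intro p₀ b hb
  change b < pcEnv lam q v p₀.1 p₀.2 at hb
  rw [hpcEnv p₀] at hb
  set A := sInf (S p₀) with hA_def
  set b' : ℝ := (b + A) / 2 with hb'_def
  have hbb' : b < b' := by rw [hb'_def]; linarith
  have hb'A : b' < A := by rw [hb'_def]; linarith
  set T : ℝ := |p₀.2| + 1 with hT_def
  have hT0 : (0:ℝ) < T := by positivity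
  have hTt : p₀.2 < T := lt_of_le_of_lt (le_abs_self _) (by rw [hT_def]; linarith)
  set lq : ℝ := lam ^ (1/q) with hlq_def
  have hlq0 : 0 < lq := Real.rpow_pos_of_pos hlam0 _
  set M : ℝ := max c₀ ((|b'| + 1) / lq) with hM_def
  have hM0 : 0 < M := lt_of_lt_of_le hc₀ (le_max_left _ _)
  have hb'M : b' < lq * M := by
    have h1 : (|b'| + 1) / lq ≤ M := le_max_right _ _
    have h2 : lq * ((|b'| + 1) / lq) = |b'| + 1 := by field_simp
    have h3 : lq * ((|b'| + 1) / lq) ≤ lq * M := mul_le_mul_of_nonneg_left h1 hlq0.le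
    have := le_abs_self b'
    linarith
  obtain ⟨R, hR⟩ := hcoer T hT0 M
  set K : Set (EuclideanSpace ℝ (Fin n)) := Metric.closedBall (0 : _) |R| with hK_def
  have hKcomp : IsCompact K := isCompact_closedBall _ _
  -- continuity of `g`
  have hgcont : Continuous g := by
    have hz : Continuous fun w : (EuclideanSpace ℝ (Fin n) × ℝ) × EuclideanSpace ℝ (Fin n) =>
        ((1 - lam)⁻¹ • (w.1.1 - lam • w.2) : EuclideanSpace ℝ (Fin n)) := by fun_prop
    have hc1 : Continuous fun w : (EuclideanSpace ℝ (Fin n) × ℝ) × EuclideanSpace ℝ (Fin n) =>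
        v w.2 w.1.2 :=
      hv.comp (continuous_snd.prodMk (continuous_snd.comp continuous_fst))
    have hc2 : Continuous fun w : (EuclideanSpace ℝ (Fin n) × ℝ) × EuclideanSpace ℝ (Fin n) =>
        v ((1 - lam)⁻¹ • (w.1.1 - lam • w.2)) w.1.2 :=
      hv.comp (hz.prodMk (continuous_snd.comp continuous_fst))
    have hc3 : Continuous fun w : (EuclideanSpace ℝ (Fin n) × ℝ) × EuclideanSpace ℝ (Fin n) =>
        lam * (v w.2 w.1.2) ^ q +
          (1 - lam) * (v ((1 - lam)⁻¹ • (w.1.1 - lam • w.2)) w.1.2) ^ q :=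
      (continuous_const.mul (hc1.rpow_const fun w => Or.inr hq0.le)).add
        (continuous_const.mul (hc2.rpow_const fun w => Or.inr hq0.le))
    exact hc3.rpow_const fun w => Or.inr (by positivity)
  -- on `K`, `g (p₀, y) > b'`
  have hgK : ∀ y ∈ K, b' < g (p₀, y) := by
    intro y _
    have h1 : A ≤ g (p₀, y) := csInf_le (hSbdd p₀) (hg_mem p₀ y)
    linarith
  -- tube: eventually in `p`, for all `y ∈ K`, `b' < g (p, y)`
  have htube : ∀ᶠ p in 𝓝 p₀, ∀ y ∈ K, b' < g (p, y) := by
    apply hKcomp.eventually_forall_of_forall_eventually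
    intro y hy
    have h1 : ∀ᶠ z in 𝓝 (p₀, y), b' < g z :=
      Filter.Tendsto.eventually_lt tendsto_const_nhds hgcont.continuousAt (hgK y hy)
    exact h1.mono fun z hz => hz
  have hTev : ∀ᶠ p : EuclideanSpace ℝ (Fin n) × ℝ in 𝓝 p₀, p.2 < T :=
    Filter.Tendsto.eventually_lt continuous_snd.continuousAt tendsto_const_nhds hTt
  filter_upwards [htube, hTev] with p hp hpT
  -- show `b < pcEnv lam q v p.1 p.2`
  show b < pcEnv lam q v p.1 p.2
  rw [hpcEnv p]
  have hle : b' ≤ sInf (S p) := by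
    apply le_csInf (hSne p)
    intro m hm
    obtain ⟨y, rfl⟩ := hmem_g p m hm
    by_cases hyK : y ∈ K
    · exact (hp y hyK).le
    · have hyR : R ≤ ‖y‖ := by
        rw [hK_def, Metric.mem_closedBall, dist_zero_right, not_le] at hyK
        exact le_trans (le_abs_self R) hyK.le
      have hM_le : M ≤ v y p.2 := hR y p.2 hyR hpT.le
      have h5 := hlb M (v y p.2) (v ((1 - lam)⁻¹ • (p.1 - lam • y)) p.2) hM0 hM_le (hpos _ _)
      calc b' ≤ lq * M := hb'M.le
        _ ≤ _ := h5
  linarith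

/-- Lower semicontinuity of the spatially power convex envelope `u_{q,λ}` on
`ℝⁿ × [0,∞)` for continuous, uniformly positive, spatially coercive `u`
(proof of Lemma 4.2). -/
theorem stmt_9 {n : ℕ} (c₀ : ℝ) (hc₀ : 0 < c₀)
    (u : EuclideanSpace ℝ (Fin n) → ℝ → ℝ)
    (hu : ContinuousOn (fun p : EuclideanSpace ℝ (Fin n) × ℝ => u p.1 p.2)
      {p : EuclideanSpace ℝ (Fin n) × ℝ | 0 ≤ p.2})
    (hpos : ∀ x t, 0 ≤ t → c₀ ≤ u x t)
    (hcoer : ∀ T : ℝ, 0 ≤ T → ∀ M : ℝ, ∃ R : ℝ, ∀ (x : EuclideanSpace ℝ (Fin n)) (t : ℝ),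
      R ≤ ‖x‖ → 0 ≤ t → t ≤ T → M ≤ u x t)
    (lam q : ℝ) (hlam : lam ∈ Set.Ioo (0 : ℝ) 1) (hq : 1 < q) :
    LowerSemicontinuousOn
      (fun p : EuclideanSpace ℝ (Fin n) × ℝ => pcEnv lam q u p.1 p.2)
      {p : EuclideanSpace ℝ (Fin n) × ℝ | 0 ≤ p.2} := by
  -- extend `u` to all times by `v x t = u x (max t 0)`
  have hvcont : Continuous (fun p : EuclideanSpace ℝ (Fin n) × ℝ => u p.1 (max p.2 0)) := by
    have hφ : Continuous (fun p : EuclideanSpace ℝ (Fin n) × ℝ =>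
        ((p.1, max p.2 0) : EuclideanSpace ℝ (Fin n) × ℝ)) := by fun_prop
    rw [← continuousOn_univ]
    apply hu.comp hφ.continuousOn
    intro p _
    show (0:ℝ) ≤ max p.2 0
    exact le_max_right _ _
  have hvpos : ∀ (x : EuclideanSpace ℝ (Fin n)) (t : ℝ), c₀ ≤ u x (max t 0) :=
    fun x t => hpos x _ (le_max_right _ _)
  have hvcoer : ∀ T : ℝ, 0 < T → ∀ M : ℝ, ∃ R : ℝ, ∀ (x : EuclideanSpace ℝ (Fin n)) (t : ℝ),
      R ≤ ‖x‖ → t ≤ T → M ≤ u x (max t 0) := by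
    intro T hT M
    obtain ⟨R, hR⟩ := hcoer T hT.le M
    exact ⟨R, fun x t hx ht => hR x (max t 0) hx (le_max_right _ _) (max_le ht hT.le)⟩
  have main : LowerSemicontinuous (fun p : EuclideanSpace ℝ (Fin n) × ℝ =>
      pcEnv lam q (fun x t => u x (max t 0)) p.1 p.2) :=
    pcEnv_lsc_aux c₀ hc₀ _ hvcont hvpos hvcoer lam q hlam hq
  have heq : ∀ p : EuclideanSpace ℝ (Fin n) × ℝ, p ∈ {p : EuclideanSpace ℝ (Fin n) × ℝ | 0 ≤ p.2} →
      pcEnv lam q u p.1 p.2 = pcEnv lam q (fun x t => u x (max t 0)) p.1 p.2 := by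
    intro p hp
    have ht : (0:ℝ) ≤ p.2 := hp
    unfold pcEnv
    simp only [max_eq_left ht]
  intro p hp b hb
  change b < pcEnv lam q u p.1 p.2 at hb
  rw [heq p hp] at hb
  have h1 : ∀ᶠ p' in 𝓝[{p : EuclideanSpace ℝ (Fin n) × ℝ | 0 ≤ p.2}] p,
      b < pcEnv lam q (fun x t => u x (max t 0)) p'.1 p'.2 :=
    Eventually.filter_mono nhdsWithin_le_nhds (main p b hb)
  filter_upwards [h1, self_mem_nhdsWithin] with p' h1' h2'
  show b < pcEnv lam q u p'.1 p'.2
  rw [heq p' h2']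
  exact h1'
end

section
/- Let V : ℝ → ℝ be twice continuously differentiable with V''(s) ≤ 0 for all s > 0 and V(0) ≥ 0. Then for every β ∈ (0,1) the function r ↦ r^β · V(r^{1−β}) is concave on (0,∞). -/
/-- Section 5.2 of the paper: if `V ∈ C²(ℝ)` with `V'' ≤ 0` on `(0,∞)` and `V(0) ≥ 0`,
then for every `β ∈ (0,1)` the function `r ↦ r^β V(r^{1−β})` is concave on `(0,∞)`. -/
theorem stmt_11 (V : ℝ → ℝ) (hV : ContDiff ℝ 2 V)
    (hV'' : ∀ s : ℝ, 0 < s → deriv (deriv V) s ≤ 0) (hV0 : 0 ≤ V 0) :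
    ∀ β ∈ Set.Ioo (0 : ℝ) 1,
      ConcaveOn ℝ (Set.Ioi (0 : ℝ)) (fun r : ℝ => r ^ β * V (r ^ (1 - β))) := by
  intro β hβ
  obtain ⟨hβ0, hβ1⟩ := hβ
  set α : ℝ := 1 - β with hαdef
  have hα0 : 0 < α := by simp only [hαdef]; linarith
  have hVd : Differentiable ℝ V := hV.differentiable (by norm_num)
  have hV1 : ContDiff ℝ 1 (deriv V) := by
    have := (contDiff_succ_iff_deriv (n := 1)).mp (by exact_mod_cast hV)
    exact this.2.2
  have hVd' : Differentiable ℝ (deriv V) := hV1.differentiable (by norm_num)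
  -- key inequality: s V'(s) ≤ V(s) for s > 0
  have key : ∀ s : ℝ, 0 < s → s * deriv V s ≤ V s := by
    intro s hs
    have anti : AntitoneOn (deriv V) (Set.Ici 0) := by
      apply antitoneOn_of_deriv_nonpos (convex_Ici 0) hVd'.continuous.continuousOn
        hVd'.differentiableOn
      intro x hx
      rw [interior_Ici] at hx
      exact hV'' x hx
    obtain ⟨c, hc, hceq⟩ := exists_deriv_eq_slope V hs hVd.continuous.continuousOn
      (hVd.differentiableOn)
    have hc1 : (0:ℝ) ≤ c := le_of_lt hc.1
    have hc2 : c ≤ s := le_of_lt hc.2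
    have h1 : deriv V s ≤ deriv V c := anti hc1 (le_of_lt hs) hc2
    have h2 : V s - V 0 = deriv V c * s := by
      field_simp at hceq
      rw [hceq, sub_zero, div_mul_cancel₀ _ hs.ne']
    nlinarith
  -- derivative computations
  set g : ℝ → ℝ := fun r => β * r ^ (β - 1) * V (r ^ α) + α * deriv V (r ^ α) with hgdef
  have hfd : ∀ x : ℝ, 0 < x →
      HasDerivAt (fun r : ℝ => r ^ β * V (r ^ α)) (g x) x := by
    intro x hx
    have h1 : HasDerivAt (fun r : ℝ => r ^ β) (β * x ^ (β - 1)) x := by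
      simpa [mul_comm] using Real.hasDerivAt_rpow_const (x := x) (p := β) (Or.inl hx.ne')
    have h2 : HasDerivAt (fun r : ℝ => r ^ α) (α * x ^ (α - 1)) x := by
      simpa [mul_comm] using Real.hasDerivAt_rpow_const (x := x) (p := α) (Or.inl hx.ne')
    have h3 : HasDerivAt (fun r : ℝ => V (r ^ α))
        (deriv V (x ^ α) * (α * x ^ (α - 1))) x :=
      ((hVd (x ^ α)).hasDerivAt).comp x h2
    have h4 := h1.mul h3
    have hsimp : x ^ β * x ^ (α - 1) = 1 := by
      rw [← Real.rpow_add hx]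
      have : β + (α - 1) = 0 := by simp [hαdef]
      rw [this, Real.rpow_zero]
    refine h4.congr_deriv ?_
    simp only [hgdef]
    rw [show x ^ β * (deriv V (x ^ α) * (α * x ^ (α - 1)))
        = α * deriv V (x ^ α) * (x ^ β * x ^ (α - 1)) from by ring, hsimp]
    ring
  have hgd : ∀ x : ℝ, 0 < x →
      HasDerivAt g (β * ((β - 1) * x ^ (β - 2)) * V (x ^ α)
        + β * x ^ (β - 1) * (deriv V (x ^ α) * (α * x ^ (α - 1)))
        + α * (deriv (deriv V) (x ^ α) * (α * x ^ (α - 1)))) x := by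
    intro x hx
    have h2 : HasDerivAt (fun r : ℝ => r ^ α) (α * x ^ (α - 1)) x := by
      simpa [mul_comm] using Real.hasDerivAt_rpow_const (x := x) (p := α) (Or.inl hx.ne')
    have h1 : HasDerivAt (fun r : ℝ => r ^ (β - 1)) ((β - 1) * x ^ (β - 2)) x := by
      have := Real.hasDerivAt_rpow_const (x := x) (p := β - 1) (Or.inl hx.ne')
      convert this using 1
      rw [show β - 1 - 1 = β - 2 from by ring]
    have h3 : HasDerivAt (fun r : ℝ => V (r ^ α))
        (deriv V (x ^ α) * (α * x ^ (α - 1))) x :=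
      ((hVd (x ^ α)).hasDerivAt).comp x h2
    have h5 : HasDerivAt (fun r : ℝ => deriv V (r ^ α))
        (deriv (deriv V) (x ^ α) * (α * x ^ (α - 1))) x :=
      by have := ((hVd' (x ^ α)).hasDerivAt).comp x h2; exact this
    have hA : HasDerivAt (fun r : ℝ => β * r ^ (β - 1) * V (r ^ α))
        (β * ((β - 1) * x ^ (β - 2)) * V (x ^ α)
          + β * x ^ (β - 1) * (deriv V (x ^ α) * (α * x ^ (α - 1)))) x := by
      have := ((h1.const_mul β).mul h3)
      exact this
    have hB := h5.const_mul α
    exact hA.add hB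
  -- deriv f = g on Ioi 0
  have hderiv_eq : ∀ x : ℝ, 0 < x →
      deriv (fun r : ℝ => r ^ β * V (r ^ α)) x = g x := fun x hx => (hfd x hx).deriv
  have hEvEq : ∀ x : ℝ, 0 < x →
      (fun r : ℝ => deriv (fun r : ℝ => r ^ β * V (r ^ α)) r) =ᶠ[nhds x] g := by
    intro x hx
    filter_upwards [Ioi_mem_nhds hx] with y hy
    exact hderiv_eq y hy
  apply concaveOn_of_deriv2_nonpos (convex_Ioi 0)
  · -- continuity
    intro x hx
    have hx' : (0:ℝ) < x := hx
    have : ContinuousAt (fun r : ℝ => r ^ β * V (r ^ α)) x := by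
      have c1 : ContinuousAt (fun r : ℝ => r ^ β) x :=
        Real.continuousAt_rpow_const x β (Or.inl hx'.ne')
      have c2 : ContinuousAt (fun r : ℝ => r ^ α) x :=
        Real.continuousAt_rpow_const x α (Or.inl hx'.ne')
      exact c1.mul (hVd.continuous.continuousAt.comp c2)
    exact this.continuousWithinAt
  · intro x hx
    rw [interior_Ioi] at hx
    exact ((hfd x hx).differentiableAt).differentiableWithinAt
  · intro x hx
    rw [interior_Ioi] at hx
    have : DifferentiableAt ℝ g x := (hgd x hx).differentiableAt
    exact (this.congr_of_eventuallyEq ((hEvEq x hx))).differentiableWithinAt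
  · intro x hx
    rw [interior_Ioi] at hx
    have hx' : (0:ℝ) < x := hx
    have heq : deriv (deriv (fun r : ℝ => r ^ β * V (r ^ α))) x = deriv g x :=
      Filter.EventuallyEq.deriv_eq (hEvEq x hx)
    have hgd' := (hgd x hx).deriv
    set s : ℝ := x ^ α with hsdef
    have hs0 : 0 < s := Real.rpow_pos_of_pos hx' α
    have hkey := key s hs0
    have hV2 := hV'' s hs0
    -- rpow algebra
    have e1 : x ^ (β - 1) * x ^ (α - 1) = x⁻¹ := by
      rw [← Real.rpow_add hx']
      have : β - 1 + (α - 1) = -1 := by simp [hαdef]; ring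
      rw [this, Real.rpow_neg_one]
    have e2 : x ^ (β - 2) = x⁻¹ * s⁻¹ := by
      have : β - 2 = -1 + -α := by simp [hαdef]; ring
      rw [this, Real.rpow_add hx', Real.rpow_neg_one, Real.rpow_neg hx'.le, hsdef]
    have e3 : x ^ (α - 1) * s = x ^ α * x ^ (α - 1) := by ring
    have hxα1 : 0 < x ^ (α - 1) := Real.rpow_pos_of_pos hx' _
    have e4 : s * x ^ (α - 1) = x ^ α * x ^ (α - 1) := by rw [hsdef]
    have e5 : x ^ α * x ^ (α - 1) = x ^ (2 * α - 1) := by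
      rw [← Real.rpow_add hx']; ring_nf
    show deriv^[2] (fun r : ℝ => r ^ β * V (r ^ (1 - β))) x ≤ 0
    have hαβ : (1 : ℝ) - β = α := rfl
    rw [Function.iterate_succ, Function.iterate_one, Function.comp_apply]
    simp only [hαβ]
    rw [heq, hgd']
    -- now show the explicit expression is ≤ 0
    have hxinv : 0 < x⁻¹ := inv_pos.mpr hx'
    have hsinv : 0 < s⁻¹ := inv_pos.mpr hs0
    have hterm3 : α * (deriv (deriv V) s * (α * x ^ (α - 1))) ≤ 0 := by
      have : deriv (deriv V) s * (α * x ^ (α - 1)) ≤ 0 :=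
        mul_nonpos_of_nonpos_of_nonneg hV2 (by positivity)
      nlinarith
    have hterm12 : β * ((β - 1) * x ^ (β - 2)) * V s
        + β * x ^ (β - 1) * (deriv V s * (α * x ^ (α - 1))) ≤ 0 := by
      have expand : β * ((β - 1) * x ^ (β - 2)) * V s
          + β * x ^ (β - 1) * (deriv V s * (α * x ^ (α - 1)))
          = β * x⁻¹ * s⁻¹ * ((β - 1) * V s + α * (s * deriv V s)) := by
        have hss : s⁻¹ * s = 1 := inv_mul_cancel₀ hs0.ne'
        rw [e2]
        linear_combination (β * α * deriv V s) * e1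
          - (β * α * deriv V s * x⁻¹) * hss
      rw [expand]
      have h1 : (β - 1) * V s + α * (s * deriv V s) ≤ 0 := by
        have : α * (s * deriv V s) ≤ α * V s := by
          exact mul_le_mul_of_nonneg_left hkey hα0.le
        have hα' : α = 1 - β := rfl
        have hz : (β - 1) * V s + α * V s = 0 := by rw [hα']; ring
        linarith
      have h2 : 0 ≤ β * x⁻¹ * s⁻¹ := by positivity
      exact mul_nonpos_of_nonneg_of_nonpos h2 h1
    linarith
end

section
/- Let a > 0, α ∈ (0,1), L > 0 and c₀ > 0. Then there exists β₀ ∈ (0,1) such that for every β ∈ [β₀, 1) and every s ∈ (0, L], the function r ↦ β s² r^{−1} + a (1−β)^{α−1} s^α r^{β(1−α)} is concave on [c₀, ∞). -/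
open Set Real

private lemma hd_aux {A C γ : ℝ} {x : ℝ} (hx : 0 < x) :
    HasDerivAt (fun r : ℝ => A * r ^ (-1 : ℝ) + C * r ^ γ)
      ((-A) * x ^ (-2 : ℝ) + (C * γ) * x ^ (γ - 1)) x := by
  have h1 := (Real.hasDerivAt_rpow_const (x := x) (p := (-1 : ℝ)) (Or.inl hx.ne')).const_mul A
  have h2 := (Real.hasDerivAt_rpow_const (x := x) (p := γ) (Or.inl hx.ne')).const_mul C
  have h := h1.add h2
  have e : ((-1 : ℝ) - 1) = -2 := by norm_num
  rw [e] at h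
  refine h.congr_deriv ?_
  ring

private lemma hd_aux2 {A C γ : ℝ} {x : ℝ} (hx : 0 < x) :
    HasDerivAt (fun r : ℝ => (-A) * r ^ (-2 : ℝ) + (C * γ) * r ^ (γ - 1))
      ((2 * A) * x ^ (-3 : ℝ) + (C * γ * (γ - 1)) * x ^ (γ - 2)) x := by
  have h1 := (Real.hasDerivAt_rpow_const (x := x) (p := (-2 : ℝ)) (Or.inl hx.ne')).const_mul (-A)
  have h2 := (Real.hasDerivAt_rpow_const (x := x) (p := γ - 1) (Or.inl hx.ne')).const_mul (C * γ)
  have h := h1.add h2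
  have e : ((-2 : ℝ) - 1) = -3 := by norm_num
  have e2 : (γ - 1 - 1) = γ - 2 := by ring
  rw [e, e2] at h
  refine h.congr_deriv ?_
  ring

set_option maxHeartbeats 1000000 in
/-- Section 5.3 of the paper: for the viscous Hamilton–Jacobi operator, there is
`β₀ ∈ (0,1)` such that for all `β ∈ [β₀,1)` and all `s ∈ (0,L]`, the function
`r ↦ β s² r⁻¹ + a (1−β)^{α−1} s^α r^{β(1−α)}` is concave on `[c₀,∞)`. -/
theorem stmt_13 (a α L c₀ : ℝ) (ha : 0 < a) (hα : α ∈ Set.Ioo (0 : ℝ) 1)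
    (hL : 0 < L) (hc₀ : 0 < c₀) :
    ∃ β₀ ∈ Set.Ioo (0 : ℝ) 1, ∀ β ∈ Set.Ico β₀ (1 : ℝ), ∀ s ∈ Set.Ioc (0 : ℝ) L,
      ConcaveOn ℝ (Set.Ici c₀)
        (fun r : ℝ =>
          β * s ^ (2 : ℕ) * r ^ (-1 : ℝ) +
            a * (1 - β) ^ (α - 1) * s ^ α * r ^ (β * (1 - α))) := by
  obtain ⟨hα0, hα1⟩ := hα
  set m : ℝ := α * (1 - α) / 2 with hm_def
  have hm0 : 0 < m := by rw [hm_def]; nlinarith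
  set K : ℝ := min (c₀ ^ 2) 1 with hK_def
  have hK0 : 0 < K := by
    rw [hK_def]; exact lt_min (by positivity) one_pos
  set N : ℝ := 2 * L ^ (2 - α) / (a * m * K) with hN_def
  have hN0 : 0 < N := by
    rw [hN_def]
    have : (0:ℝ) < L ^ (2 - α) := Real.rpow_pos_of_pos hL _
    positivity
  set M : ℝ := max N 1 with hM_def
  have hM0 : 0 < M := lt_of_lt_of_le one_pos (le_max_right _ _)
  have hNM : N ≤ M := le_max_left _ _
  set δ : ℝ := min (1 / 2) (M ^ ((α - 1)⁻¹)) with hδ_def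
  have hδ0 : 0 < δ := lt_min (by norm_num) (Real.rpow_pos_of_pos hM0 _)
  have hδhalf : δ ≤ 1 / 2 := min_le_left _ _
  refine ⟨1 - δ, ⟨by linarith, by linarith⟩, ?_⟩
  rintro β ⟨hβ₀, hβ1⟩ s ⟨hs0, hsL⟩
  have hβhalf : (1:ℝ) / 2 ≤ β := by linarith
  have ht0 : 0 < 1 - β := by linarith
  have htδ : 1 - β ≤ δ := by linarith
  -- the exponent γ
  set γ : ℝ := β * (1 - α) with hγ_def
  have hγ0 : 0 < γ := by rw [hγ_def]; nlinarith
  have hγ1 : γ < 1 := by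
    rw [hγ_def]; nlinarith
  have hγα : 1 - γ ≥ α := by rw [hγ_def]; nlinarith
  have hγlow : (1 - α) / 2 ≤ γ := by rw [hγ_def]; nlinarith
  set A : ℝ := β * s ^ (2:ℕ) with hA_def
  set C : ℝ := a * (1 - β) ^ (α - 1) * s ^ α with hC_def
  have hsα : 0 < s ^ α := Real.rpow_pos_of_pos hs0 _
  have htα : 0 < (1 - β) ^ (α - 1) := Real.rpow_pos_of_pos ht0 _
  have hC0 : 0 < C := by rw [hC_def]; positivity
  have hA0 : 0 ≤ A := by rw [hA_def]; positivity
  -- key bound : M ≤ (1-β)^(α-1)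
  have hcne : α - 1 ≠ 0 := by intro h; rw [sub_eq_zero] at h; exact absurd h.symm hα1.ne'
  have hMt : M ≤ (1 - β) ^ (α - 1) := by
    have hδM : δ ≤ M ^ ((α - 1)⁻¹) := min_le_right _ _
    have h1 : (M ^ ((α - 1)⁻¹)) ^ (α - 1) ≤ δ ^ (α - 1) :=
      Real.rpow_le_rpow_of_nonpos hδ0 hδM (by linarith)
    have h2 : δ ^ (α - 1) ≤ (1 - β) ^ (α - 1) :=
      Real.rpow_le_rpow_of_nonpos ht0 htδ (by linarith)
    rw [← Real.rpow_mul hM0.le, inv_mul_cancel₀ hcne, Real.rpow_one] at h1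
    linarith
  have hL2α : 0 < L ^ (2 - α) := Real.rpow_pos_of_pos hL _
  have haN : 2 * L ^ (2 - α) ≤ a * (1 - β) ^ (α - 1) * m * K := by
    have e : a * N * m * K = 2 * L ^ (2 - α) := by
      rw [hN_def]; field_simp
    have hNt : N ≤ (1 - β) ^ (α - 1) := le_trans hNM hMt
    have h' : (a * m * K) * N ≤ (a * m * K) * ((1 - β) ^ (α - 1)) :=
      mul_le_mul_of_nonneg_left hNt (by positivity)
    nlinarith [e]
  -- core second-derivative inequality ingredient: 2*A ≤ C*γ*(1-γ)*x^(1+γ) for x ≥ c₀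
  have key : ∀ x : ℝ, c₀ ≤ x → 2 * A ≤ C * γ * (1 - γ) * x ^ (1 + γ) := by
    intro x hx
    have hx0 : 0 < x := lt_of_lt_of_le hc₀ hx
    have hxK : K ≤ x ^ (1 + γ) := by
      have hcx : c₀ ^ (1 + γ) ≤ x ^ (1 + γ) :=
        Real.rpow_le_rpow hc₀.le hx (by linarith)
      rcases le_or_gt 1 c₀ with hc1 | hc1
      · have h1 : (1:ℝ) ≤ c₀ ^ (1 + γ) := by
          have := Real.rpow_le_rpow_of_exponent_le hc1 (show (0:ℝ) ≤ 1 + γ by linarith)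
          rwa [Real.rpow_zero] at this
        have : K ≤ 1 := min_le_right _ _
        linarith
      · have h2 : c₀ ^ (2:ℝ) ≤ c₀ ^ (1 + γ) :=
          Real.rpow_le_rpow_of_exponent_ge hc₀ hc1.le (by linarith)
        have e2 : c₀ ^ (2:ℝ) = c₀ ^ (2:ℕ) := by
          rw [← Real.rpow_natCast c₀ 2]; norm_num
        have : K ≤ c₀ ^ (2:ℕ) := min_le_left _ _
        rw [e2] at h2
        linarith
    have hmγ : m * K ≤ (γ * (1 - γ)) * x ^ (1 + γ) := by
      have h1 : m ≤ γ * (1 - γ) := by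
        rw [hm_def]; nlinarith
      exact mul_le_mul h1 hxK hK0.le (by nlinarith)
    have hs2 : s ^ (2:ℕ) = s ^ α * s ^ (2 - α) := by
      rw [← Real.rpow_natCast s 2, ← Real.rpow_add hs0]
      norm_num
    have hsLα : s ^ (2 - α) ≤ L ^ (2 - α) :=
      Real.rpow_le_rpow hs0.le hsL (by linarith)
    have step1 : 2 * A ≤ 2 * L ^ (2 - α) * s ^ α := by
      rw [hA_def, hs2]
      have hβ1' : β ≤ 1 := hβ1.le
      nlinarith [mul_pos hsα (Real.rpow_pos_of_pos hs0 (2 - α))]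
    have step2 : 2 * L ^ (2 - α) * s ^ α ≤ (a * (1 - β) ^ (α - 1) * m * K) * s ^ α := by
      exact mul_le_mul_of_nonneg_right haN hsα.le
    have step3 : (a * (1 - β) ^ (α - 1) * m * K) * s ^ α ≤ C * γ * (1 - γ) * x ^ (1 + γ) := by
      rw [hC_def]
      have h0 : 0 ≤ a * (1 - β) ^ (α - 1) * s ^ α := by positivity
      calc a * (1 - β) ^ (α - 1) * m * K * s ^ α
          = (a * (1 - β) ^ (α - 1) * s ^ α) * (m * K) := by ring
        _ ≤ (a * (1 - β) ^ (α - 1) * s ^ α) * ((γ * (1 - γ)) * x ^ (1 + γ)) :=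
            mul_le_mul_of_nonneg_left hmγ h0
        _ = a * (1 - β) ^ (α - 1) * s ^ α * γ * (1 - γ) * x ^ (1 + γ) := by ring
    linarith
  -- now the concavity via second derivative
  have hfun : (fun r : ℝ =>
          β * s ^ (2 : ℕ) * r ^ (-1 : ℝ) +
            a * (1 - β) ^ (α - 1) * s ^ α * r ^ (β * (1 - α)))
      = (fun r : ℝ => A * r ^ (-1 : ℝ) + C * r ^ γ) := by
    rw [hA_def, hC_def, hγ_def]
  rw [hfun]
  have hderiv : Set.EqOn (deriv (fun r : ℝ => A * r ^ (-1 : ℝ) + C * r ^ γ))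
      (fun r : ℝ => (-A) * r ^ (-2 : ℝ) + (C * γ) * r ^ (γ - 1)) (Set.Ioi c₀) := by
    intro y hy
    exact (hd_aux (lt_trans hc₀ hy)).deriv
  apply concaveOn_of_deriv2_nonpos (convex_Ici c₀)
  · intro y hy
    exact (hd_aux (lt_of_lt_of_le hc₀ hy)).continuousAt.continuousWithinAt
  · rw [interior_Ici]
    intro y hy
    exact ((hd_aux (lt_trans hc₀ hy)).differentiableAt).differentiableWithinAt
  · rw [interior_Ici]
    apply DifferentiableOn.congr
      (f := fun r : ℝ => (-A) * r ^ (-2 : ℝ) + (C * γ) * r ^ (γ - 1))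
    · intro y hy
      exact ((hd_aux2 (lt_trans hc₀ hy)).differentiableAt).differentiableWithinAt
    · exact hderiv
  · rw [interior_Ici]
    intro x hx
    have hx0 : 0 < x := lt_trans hc₀ hx
    have hev : deriv (fun r : ℝ => A * r ^ (-1 : ℝ) + C * r ^ γ)
        =ᶠ[nhds x] (fun r : ℝ => (-A) * r ^ (-2 : ℝ) + (C * γ) * r ^ (γ - 1)) :=
      Filter.eventuallyEq_of_mem (isOpen_Ioi.mem_nhds hx) hderiv
    have e1 : deriv^[2] (fun r : ℝ => A * r ^ (-1 : ℝ) + C * r ^ γ) x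
        = (2 * A) * x ^ (-3 : ℝ) + (C * γ * (γ - 1)) * x ^ (γ - 2) := by
      show deriv (deriv (fun r : ℝ => A * r ^ (-1 : ℝ) + C * r ^ γ)) x = _
      rw [hev.deriv_eq]
      exact (hd_aux2 hx0).deriv
    rw [e1]
    have hkey := key x (le_of_lt hx)
    have hx3 : (0:ℝ) < x ^ (-3 : ℝ) := Real.rpow_pos_of_pos hx0 _
    have hmulx : x ^ (1 + γ) * x ^ (-3 : ℝ) = x ^ (γ - 2) := by
      rw [← Real.rpow_add hx0]; ring_nf
    have h2 : 2 * A * x ^ (-3 : ℝ) ≤ C * γ * (1 - γ) * x ^ (γ - 2) := by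
      calc 2 * A * x ^ (-3 : ℝ)
          ≤ C * γ * (1 - γ) * x ^ (1 + γ) * x ^ (-3 : ℝ) :=
            mul_le_mul_of_nonneg_right hkey hx3.le
        _ = C * γ * (1 - γ) * (x ^ (1 + γ) * x ^ (-3 : ℝ)) := by ring
        _ = C * γ * (1 - γ) * x ^ (γ - 2) := by rw [hmulx]
    nlinarith [h2]
end

section
/- Let n ∈ ℕ, λ ∈ (0,1), ε > 0 and let X, Y, Z be real symmetric n×n matrices. Let M be the symmetric 2n×2n block matrix M = [[λ² X, λ(1−λ) X], [λ(1−λ) X, (1−λ)² X]], and suppose that the block diagonal matrix diag(λY, (1−λ)Z) ≥ M − ε M² in the Loewner (positive semidefinite) order. Then λ Y + (1−λ) Z ≥ X − ε (λ² + (1−λ)²) X²; in particular, λ Y + (1−λ) Z ≥ X − C ε I where C = (λ² + (1−λ)²) · ‖X‖² and ‖X‖ denotes the operator norm of X. -/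
open Matrix

/-- A real multiple of a Hermitian real matrix is Hermitian. -/
lemma isHermitian_smul_real {n : ℕ} (r : ℝ) {A : Matrix (Fin n) (Fin n) ℝ}
    (hA : A.IsHermitian) : (r • A).IsHermitian := by
  rw [Matrix.IsHermitian, Matrix.conjTranspose_smul, hA.eq, star_trivial]

/-- For a real symmetric matrix `X`, we have `X * X ≤ ‖X‖² • 1` in the Loewner order,
where `‖X‖` is the operator norm. -/
lemma sq_le_opNorm_sq_smul_one {n : ℕ} (X : Matrix (Fin n) (Fin n) ℝ) (hX : X.IsSymm) :
    ((‖Matrix.toEuclideanCLM (𝕜 := ℝ) X‖ ^ 2) • (1 : Matrix (Fin n) (Fin n) ℝ)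
      - X * X).PosSemidef := by
  have hXh : X.IsHermitian := by
    rwa [Matrix.IsHermitian, conjTranspose_eq_transpose_of_trivial]
  refine Matrix.PosSemidef.of_dotProduct_mulVec_nonneg ?_ ?_
  · refine Matrix.IsHermitian.sub (isHermitian_smul_real _ Matrix.isHermitian_one) ?_
    have := Matrix.isHermitian_mul_conjTranspose_self X
    rwa [hXh.eq] at this
  · intro x
    have hstar : star x = x := by simp
    set v : EuclideanSpace ℝ (Fin n) := (WithLp.equiv 2 (Fin n → ℝ)).symm x with hv
    have hnormv : ‖v‖ ^ 2 = x ⬝ᵥ x := by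
      rw [EuclideanSpace.norm_eq, Real.sq_sqrt (by positivity)]
      simp [dotProduct, hv, WithLp.equiv_symm_apply, sq, Real.norm_eq_abs, abs_mul_abs_self]
    have hXv : Matrix.toEuclideanCLM (𝕜 := ℝ) X v
        = (WithLp.equiv 2 (Fin n → ℝ)).symm (X *ᵥ x) := by
      rw [hv]; rfl
    have hnormXv : ‖Matrix.toEuclideanCLM (𝕜 := ℝ) X v‖ ^ 2 = (X *ᵥ x) ⬝ᵥ (X *ᵥ x) := by
      rw [hXv, EuclideanSpace.norm_eq, Real.sq_sqrt (by positivity)]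
      simp [dotProduct, WithLp.equiv_symm_apply, sq, Real.norm_eq_abs, abs_mul_abs_self]
    have hbound : ‖Matrix.toEuclideanCLM (𝕜 := ℝ) X v‖ ≤
        ‖Matrix.toEuclideanCLM (𝕜 := ℝ) X‖ * ‖v‖ :=
      (Matrix.toEuclideanCLM (𝕜 := ℝ) X).le_opNorm v
    have hbound2 : (X *ᵥ x) ⬝ᵥ (X *ᵥ x) ≤ ‖Matrix.toEuclideanCLM (𝕜 := ℝ) X‖ ^ 2 * (x ⬝ᵥ x) := by
      rw [← hnormXv, ← hnormv]
      calc ‖Matrix.toEuclideanCLM (𝕜 := ℝ) X v‖ ^ 2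
          ≤ (‖Matrix.toEuclideanCLM (𝕜 := ℝ) X‖ * ‖v‖) ^ 2 :=
            pow_le_pow_left₀ (norm_nonneg _) hbound 2
        _ = ‖Matrix.toEuclideanCLM (𝕜 := ℝ) X‖ ^ 2 * ‖v‖ ^ 2 := by ring
    have hquad : x ⬝ᵥ ((X * X) *ᵥ x) = (X *ᵥ x) ⬝ᵥ (X *ᵥ x) := by
      rw [← Matrix.mulVec_mulVec, Matrix.dotProduct_mulVec x X (X *ᵥ x),
        ← Matrix.mulVec_transpose, hX.eq]
    simp only [hstar, Matrix.sub_mulVec, Matrix.smul_mulVec, Matrix.one_mulVec,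
      dotProduct_sub, dotProduct_smul, smul_eq_mul]
    rw [hquad]
    linarith

/-- The matrix inequality following the Crandall–Ishii lemma in the proof of
Lemma 4.2: if `diag(λY, (1−λ)Z) ≥ M − ε M²` in the Loewner order, where
`M = [[λ²X, λ(1−λ)X], [λ(1−λ)X, (1−λ)²X]]`, then
`λY + (1−λ)Z ≥ X − ε(λ²+(1−λ)²)X²`, and in particular
`λY + (1−λ)Z ≥ X − CεI` with `C = (λ²+(1−λ)²)‖X‖²` (operator norm). -/
theorem stmt_14 {n : ℕ} (lam ε : ℝ) (hlam : lam ∈ Set.Ioo (0 : ℝ) 1) (hε : 0 < ε)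
    (X Y Z : Matrix (Fin n) (Fin n) ℝ)
    (hX : X.IsSymm) (hY : Y.IsSymm) (hZ : Z.IsSymm)
    (M : Matrix (Fin n ⊕ Fin n) (Fin n ⊕ Fin n) ℝ)
    (hM : M = Matrix.fromBlocks (lam ^ 2 • X) ((lam * (1 - lam)) • X)
      ((lam * (1 - lam)) • X) ((1 - lam) ^ 2 • X))
    (h : (Matrix.fromBlocks (lam • Y) 0 0 ((1 - lam) • Z) - (M - ε • M ^ 2)).PosSemidef) :
    ((lam • Y + (1 - lam) • Z) -
        (X - (ε * (lam ^ 2 + (1 - lam) ^ 2)) • X ^ 2)).PosSemidef ∧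
    ((lam • Y + (1 - lam) • Z) -
        (X - (((lam ^ 2 + (1 - lam) ^ 2) *
            ‖Matrix.toEuclideanCLM (𝕜 := ℝ) X‖ ^ 2) * ε) •
          (1 : Matrix (Fin n) (Fin n) ℝ))).PosSemidef := by
  obtain ⟨hlam0, hlam1⟩ := hlam
  -- congruence with the "stacking" matrix P = [I; I]
  set P : Matrix (Fin n ⊕ Fin n) (Fin n) ℝ := Matrix.fromRows 1 1 with hP
  have hPH : Pᴴ = Matrix.fromCols 1 1 := by
    rw [hP, Matrix.conjTranspose_fromRows_eq_fromCols_conjTranspose, conjTranspose_one]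
  have hsum : ∀ a b c d : Matrix (Fin n) (Fin n) ℝ,
      Pᴴ * Matrix.fromBlocks a b c d * P = a + c + (b + d) := by
    intro a b c d
    rw [hPH, hP, Matrix.fromCols_mul_fromBlocks, Matrix.fromCols_mul_fromRows]
    simp [Matrix.one_mul, Matrix.mul_one]
  have key : (Pᴴ * (Matrix.fromBlocks (lam • Y) 0 0 ((1 - lam) • Z) - (M - ε • M ^ 2)) * P
      ).PosSemidef := h.conjTranspose_mul_mul_same P
  have hfirst : Pᴴ * (Matrix.fromBlocks (lam • Y) 0 0 ((1 - lam) • Z) - (M - ε • M ^ 2)) * P =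
      (lam • Y + (1 - lam) • Z) - (X - (ε * (lam ^ 2 + (1 - lam) ^ 2)) • X ^ 2) := by
    have expand : Pᴴ * (Matrix.fromBlocks (lam • Y) 0 0 ((1 - lam) • Z) - (M - ε • M ^ 2)) * P
        = Pᴴ * Matrix.fromBlocks (lam • Y) 0 0 ((1 - lam) • Z) * P
          - (Pᴴ * M * P - ε • (Pᴴ * (M * M) * P)) := by
      rw [pow_two]
      simp only [Matrix.mul_sub, Matrix.sub_mul, Matrix.mul_smul, Matrix.smul_mul]
    rw [expand, hsum]
    have hMsq : M * M = Matrix.fromBlocks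
        ((lam ^ 2 * lam ^ 2 + lam * (1 - lam) * (lam * (1 - lam))) • (X * X))
        ((lam ^ 2 * (lam * (1 - lam)) + lam * (1 - lam) * (1 - lam) ^ 2) • (X * X))
        ((lam * (1 - lam) * lam ^ 2 + (1 - lam) ^ 2 * (lam * (1 - lam))) • (X * X))
        ((lam * (1 - lam) * (lam * (1 - lam)) + (1 - lam) ^ 2 * (1 - lam) ^ 2) • (X * X)) := by
      rw [hM, Matrix.fromBlocks_multiply]
      simp only [smul_mul_smul_comm, ← smul_add, ← add_smul]
    rw [hMsq, hsum, hM, hsum, pow_two X]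
    simp only [smul_add, add_smul, smul_smul]
    module
  have first : ((lam • Y + (1 - lam) • Z) -
      (X - (ε * (lam ^ 2 + (1 - lam) ^ 2)) • X ^ 2)).PosSemidef := hfirst ▸ key
  refine ⟨first, ?_⟩
  have hc : 0 ≤ ε * (lam ^ 2 + (1 - lam) ^ 2) := by positivity
  have hsmul : ((ε * (lam ^ 2 + (1 - lam) ^ 2)) •
      ((‖Matrix.toEuclideanCLM (𝕜 := ℝ) X‖ ^ 2) • (1 : Matrix (Fin n) (Fin n) ℝ)
        - X * X)).PosSemidef := by
    obtain ⟨h1, h2⟩ := sq_le_opNorm_sq_smul_one X hX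
    refine Matrix.PosSemidef.of_dotProduct_mulVec_nonneg (isHermitian_smul_real _ h1) fun x => ?_
    have := (sq_le_opNorm_sq_smul_one X hX).dotProduct_mulVec_nonneg x
    simp only [Matrix.smul_mulVec, dotProduct_smul, smul_eq_mul] at this ⊢
    exact mul_nonneg hc this
  have heq : ((lam • Y + (1 - lam) • Z) -
      (X - (((lam ^ 2 + (1 - lam) ^ 2) * ‖Matrix.toEuclideanCLM (𝕜 := ℝ) X‖ ^ 2) * ε) •
        (1 : Matrix (Fin n) (Fin n) ℝ))) =
      ((lam • Y + (1 - lam) • Z) - (X - (ε * (lam ^ 2 + (1 - lam) ^ 2)) • X ^ 2)) +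
      ((ε * (lam ^ 2 + (1 - lam) ^ 2)) •
        ((‖Matrix.toEuclideanCLM (𝕜 := ℝ) X‖ ^ 2) • (1 : Matrix (Fin n) (Fin n) ℝ) - X * X)) := by
    rw [pow_two X]
    generalize ‖Matrix.toEuclideanCLM (𝕜 := ℝ) X‖ = c
    module
  rw [heq]
  exact first.add hsmul
end

section
/- Let R > 0, t > 0 and r ≥ 0. Let 𝒜(r,t) be the set of locally absolutely continuous curves γ : [0,t] → ℝ with γ(0) = r and |γ'(s)| ≤ π · min{R², γ(s)²} for almost every s ∈ [0,t]. Then inf{ γ(t) : γ ∈ 𝒜(r,t) } = Φ(r,t), where Φ(r,t) = r/(1 + π r t) if r ≤ R; Φ(r,t) = R² / (π R² t − r + 2R) if R < r ≤ R + π R² t; and Φ(r,t) = r − π R² t if r > R + π R² t. Moreover, the infimum is attained. -/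
open MeasureTheory intervalIntegral

/-- The value function `Φ(r,t)` of the radial control problem in Example 5.1. -/
noncomputable def Phi (R r t : ℝ) : ℝ :=
  if r ≤ R then r / (1 + Real.pi * r * t)
  else if r ≤ R + Real.pi * R ^ 2 * t then
    R ^ 2 / (Real.pi * R ^ 2 * t - r + 2 * R)
  else r - Real.pi * R ^ 2 * t

/-- Admissibility for the control problem of Example 5.1: `γ` is (locally) absolutely
continuous on `[0,t]` with `γ(0) = r` and `|γ'(s)| ≤ π min{R², γ(s)²}` a.e.,
expressed through an integrable a.e. derivative `g`. -/
def Admissible (R r t : ℝ) (γ : ℝ → ℝ) : Prop :=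
  γ 0 = r ∧ ∃ g : ℝ → ℝ, IntegrableOn g (Set.Icc 0 t) ∧
    (∀ s ∈ Set.Icc (0 : ℝ) t, γ s = r + ∫ τ in (0 : ℝ)..s, g τ) ∧
    (∀ᵐ s ∂(volume.restrict (Set.Icc (0 : ℝ) t)),
      |g s| ≤ Real.pi * min (R ^ 2) ((γ s) ^ 2))

namespace Ex51

variable {R r : ℝ}

lemma min_lip (hR : 0 ≤ R) (x y : ℝ) :
    min (R ^ 2) (x ^ 2) ≤ min (R ^ 2) (y ^ 2) + 2 * R * |x - y| := by
  have hxy := abs_sub_abs_le_abs_sub x y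
  have hx := abs_nonneg x
  have hy := abs_nonneg y
  have hax : x ^ 2 = |x| ^ 2 := (sq_abs x).symm
  have hay : y ^ 2 = |y| ^ 2 := (sq_abs y).symm
  have habs := abs_nonneg (x - y)
  rcases le_total (x ^ 2) (R ^ 2) with h1 | h1 <;>
    rcases le_total (y ^ 2) (R ^ 2) with h2 | h2
  · rw [min_eq_right h1, min_eq_right h2]
    have hxR : |x| ≤ R := by nlinarith [sq_abs x]
    have hyR : |y| ≤ R := by nlinarith [sq_abs y]
    nlinarith
  · rw [min_eq_right h1, min_eq_left h2]
    nlinarith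
  · rw [min_eq_left h1, min_eq_right h2]
    have hyR : |y| ≤ R := by nlinarith [sq_abs y]
    have hxR : R ≤ |x| := by nlinarith [sq_abs x]
    nlinarith
  · rw [min_eq_left h1, min_eq_left h2]
    nlinarith

lemma phi_zero (hR : 0 < R) (hr : 0 ≤ r) : Phi R r 0 = r := by
  unfold Phi
  split_ifs with h1 h2
  · norm_num
  · exfalso; apply h1; nlinarith [Real.pi_pos]
  · ring




lemma phi_hasDeriv (hR : 0 < R) (hr : 0 ≤ r) {s : ℝ} (hs : 0 ≤ s) :
    HasDerivAt (fun u => Phi R r u)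
      (-(Real.pi * min (R ^ 2) ((Phi R r s) ^ 2))) s := by
  have hπ := Real.pi_pos
  by_cases hrR : r ≤ R
  · have hfun : (fun u => Phi R r u) = fun u => r / (1 + Real.pi * r * u) := by
      funext u; simp [Phi, hrR]
    have hden0 : (0:ℝ) < 1 + Real.pi * r * s := by nlinarith [mul_nonneg (mul_nonneg Real.pi_pos.le hr) hs]
    have hden : 1 + Real.pi * r * s ≠ 0 := ne_of_gt hden0
    have h1 : HasDerivAt (fun u => 1 + Real.pi * r * u) (Real.pi * r) s := by
      simpa using ((hasDerivAt_id s).const_mul (Real.pi * r)).const_add (1:ℝ)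
    have hd := (hasDerivAt_const s r).div h1 hden
    rw [hfun]
    refine hd.congr_deriv ?_
    have hφ : Phi R r s = r / (1 + Real.pi * r * s) := by simp [Phi, hrR]
    have hφ0 : 0 ≤ Phi R r s := by rw [hφ]; exact div_nonneg hr hden0.le
    have hφle : Phi R r s ≤ R := by
      rw [hφ]
      have h2 : r / (1 + Real.pi * r * s) ≤ r := div_le_self hr (by nlinarith [mul_nonneg (mul_nonneg Real.pi_pos.le hr) hs])
      linarith
    have hmin : min (R ^ 2) ((Phi R r s) ^ 2) = (Phi R r s) ^ 2 :=
      min_eq_right (by nlinarith)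
    rw [hmin, hφ]
    field_simp
    ring
  · push_neg at hrR
    have hc0 : (0:ℝ) < Real.pi * R ^ 2 := by positivity
    have hs₀ : (0:ℝ) < (r - R) / (Real.pi * R ^ 2) := div_pos (by linarith) hc0
    set s₀ := (r - R) / (Real.pi * R ^ 2) with hs₀def
    have hcs₀ : Real.pi * R ^ 2 * s₀ = r - R := by
      rw [hs₀def]; field_simp
    have hcond : ∀ u : ℝ, (r ≤ R + Real.pi * R ^ 2 * u) ↔ s₀ ≤ u := by
      intro u
      rw [hs₀def, div_le_iff₀ hc0, mul_comm]
      constructor <;> intro h <;> linarith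
    -- the affine branch
    have haff : ∀ u : ℝ, HasDerivAt (fun v => r - Real.pi * R ^ 2 * v)
        (-(Real.pi * R ^ 2)) u := by
      intro u
      simpa using ((hasDerivAt_id u).const_mul (Real.pi * R ^ 2)).const_sub r
    -- the hyperbolic branch
    have hden : ∀ u : ℝ, s₀ ≤ u → (0:ℝ) < Real.pi * R ^ 2 * u - r + 2 * R := by
      intro u hu
      have : Real.pi * R ^ 2 * s₀ ≤ Real.pi * R ^ 2 * u := by
        exact mul_le_mul_of_nonneg_left hu hc0.le
      nlinarith
    have hhyp : ∀ u : ℝ, s₀ ≤ u → HasDerivAt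
        (fun v => R ^ 2 / (Real.pi * R ^ 2 * v - r + 2 * R))
        ((0 * (Real.pi * R ^ 2 * u - r + 2 * R) - R ^ 2 * (Real.pi * R ^ 2)) /
          (Real.pi * R ^ 2 * u - r + 2 * R) ^ 2) u := by
      intro u hu
      have h1 : HasDerivAt (fun v => Real.pi * R ^ 2 * v - r + 2 * R)
          (Real.pi * R ^ 2) u := by
        simpa using (((hasDerivAt_id u).const_mul (Real.pi * R ^ 2)).sub_const r).add_const
          (2 * R)
      exact (hasDerivAt_const u (R ^ 2)).div h1 (hden u hu).ne'
    rcases lt_trichotomy s s₀ with hlt | heq | hgt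
    · -- s < s₀ : affine branch
      have hval : Phi R r s = r - Real.pi * R ^ 2 * s := by
        have : ¬ (r ≤ R + Real.pi * R ^ 2 * s) := by rw [hcond]; exact not_le.2 hlt
        simp [Phi, hrR.not_ge, this]
      have hev : (fun u => Phi R r u) =ᶠ[nhds s] (fun v => r - Real.pi * R ^ 2 * v) := by
        filter_upwards [Iio_mem_nhds hlt] with u hu
        have : ¬ (r ≤ R + Real.pi * R ^ 2 * u) := by rw [hcond]; exact not_le.2 hu
        simp [Phi, hrR.not_ge, this]
      have hd := (haff s).congr_of_eventuallyEq hev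
      refine hd.congr_deriv ?_
      have hφ : R ≤ Phi R r s := by
        rw [hval]
        have : Real.pi * R ^ 2 * s ≤ Real.pi * R ^ 2 * s₀ :=
          mul_le_mul_of_nonneg_left hlt.le hc0.le
        nlinarith
      have hmin : min (R ^ 2) ((Phi R r s) ^ 2) = R ^ 2 :=
        min_eq_left (by nlinarith)
      rw [hmin]
    · -- s = s₀ : junction
      subst heq
      have hvals : Phi R r s₀ = R := by
        have h2 : r ≤ R + Real.pi * R ^ 2 * s₀ := by rw [hcond]
        have hD : Real.pi * R ^ 2 * s₀ - r + 2 * R = R := by linarith [hcs₀]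
        simp only [Phi, hrR.not_ge, if_false, h2, if_true]
        rw [hD]
        field_simp
      have hD : Real.pi * R ^ 2 * s₀ - r + 2 * R = R := by linarith [hcs₀]
      have hright : HasDerivWithinAt (fun u => Phi R r u) (-(Real.pi * R ^ 2))
          (Set.Ici s₀) s₀ := by
        have hd := hhyp s₀ le_rfl
        have hd' : HasDerivAt (fun v => R ^ 2 / (Real.pi * R ^ 2 * v - r + 2 * R))
            (-(Real.pi * R ^ 2)) s₀ := by
          convert hd using 1
          rw [hD]
          field_simp
          ring
        refine hd'.hasDerivWithinAt.congr ?_ ?_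
        · intro u hu
          have h2 : r ≤ R + Real.pi * R ^ 2 * u := (hcond u).2 hu
          simp [Phi, hrR.not_ge, h2]
        · have h2 : r ≤ R + Real.pi * R ^ 2 * s₀ := by rw [hcond]
          simp [Phi, hrR.not_ge, h2]
      have hleft : HasDerivWithinAt (fun u => Phi R r u) (-(Real.pi * R ^ 2))
          (Set.Iic s₀) s₀ := by
        refine (haff s₀).hasDerivWithinAt.congr ?_ ?_
        · intro u hu
          rcases eq_or_lt_of_le (Set.mem_Iic.mp hu) with h | h
          · subst h
            rw [hvals]; linarith [hcs₀]
          · have : ¬ (r ≤ R + Real.pi * R ^ 2 * u) := by rw [hcond]; exact not_le.2 h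
            simp [Phi, hrR.not_ge, this]
        · rw [hvals]; linarith [hcs₀]
      have hu := hleft.union hright
      rw [Set.Iic_union_Ici] at hu
      have hfinal : HasDerivAt (fun u => Phi R r u) (-(Real.pi * R ^ 2)) s₀ :=
        hasDerivWithinAt_univ.mp hu
      convert hfinal using 2
      rw [hvals]
      simp [min_self]
    · -- s₀ < s : hyperbolic branch
      have hval : Phi R r s = R ^ 2 / (Real.pi * R ^ 2 * s - r + 2 * R) := by
        have h2 : r ≤ R + Real.pi * R ^ 2 * s := (hcond s).2 hgt.le
        simp [Phi, hrR.not_ge, h2]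
      have hev : (fun u => Phi R r u) =ᶠ[nhds s]
          (fun v => R ^ 2 / (Real.pi * R ^ 2 * v - r + 2 * R)) := by
        filter_upwards [Ioi_mem_nhds hgt] with u hu
        have h2 : r ≤ R + Real.pi * R ^ 2 * u := (hcond u).2 (le_of_lt hu)
        simp [Phi, hrR.not_ge, h2]
      have hd := (hhyp s hgt.le).congr_of_eventuallyEq hev
      refine hd.congr_deriv ?_
      have hDpos := hden s hgt.le
      have hDge : R ≤ Real.pi * R ^ 2 * s - r + 2 * R := by
        have : Real.pi * R ^ 2 * s₀ ≤ Real.pi * R ^ 2 * s :=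
          mul_le_mul_of_nonneg_left hgt.le hc0.le
        nlinarith
      have hφ0 : 0 ≤ Phi R r s := by rw [hval]; positivity
      have hφle : Phi R r s ≤ R := by
        rw [hval, div_le_iff₀ hDpos]
        nlinarith
      have hmin : min (R ^ 2) ((Phi R r s) ^ 2) = (Phi R r s) ^ 2 :=
        min_eq_right (by nlinarith)
      rw [hmin, hval]
      field_simp
      ring

lemma phi_cont (hR : 0 < R) (hr : 0 ≤ r) :
    ContinuousOn (fun s => Phi R r s) (Set.Ici 0) := fun s hs =>
  (phi_hasDeriv hR hr hs).continuousAt.continuousWithinAt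

lemma gstar_cont (hR : 0 < R) (hr : 0 ≤ r) :
    ContinuousOn (fun s => -(Real.pi * min (R ^ 2) ((Phi R r s) ^ 2))) (Set.Ici 0) := by
  have h : Continuous fun x : ℝ => -(Real.pi * min (R ^ 2) (x ^ 2)) :=
    (continuous_const.mul (continuous_const.min (continuous_pow 2))).neg
  exact h.comp_continuousOn (phi_cont hR hr)

lemma phi_integral (hR : 0 < R) (hr : 0 ≤ r) {s : ℝ} (hs : 0 ≤ s) :
    Phi R r s = r + ∫ τ in (0:ℝ)..s, -(Real.pi * min (R ^ 2) ((Phi R r τ) ^ 2)) := by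
  have huIcc : Set.uIcc (0:ℝ) s = Set.Icc 0 s := Set.uIcc_of_le hs
  have hFTC := integral_eq_sub_of_hasDerivAt
    (f := fun u => Phi R r u)
    (f' := fun τ => -(Real.pi * min (R ^ 2) ((Phi R r τ) ^ 2)))
    (fun x hx => phi_hasDeriv hR hr (by rw [huIcc] at hx; exact hx.1))
    (((gstar_cont hR hr).mono (by rw [huIcc]; exact fun x hx => hx.1)).intervalIntegrable)
  rw [hFTC, phi_zero hR hr]; ring

lemma phi_admissible (hR : 0 < R) (hr : 0 ≤ r) {t : ℝ} (ht : 0 < t) :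
    Admissible R r t (fun s => Phi R r s) := by
  refine ⟨phi_zero hR hr, fun τ => -(Real.pi * min (R ^ 2) ((Phi R r τ) ^ 2)), ?_, ?_, ?_⟩
  · exact ((gstar_cont hR hr).mono (fun x hx => hx.1)).integrableOn_Icc
  · intro s hs; exact phi_integral hR hr hs.1
  · refine ae_of_all _ fun s => ?_
    have h0 : 0 ≤ Real.pi * min (R ^ 2) ((Phi R r s) ^ 2) :=
      mul_nonneg Real.pi_pos.le (le_min (sq_nonneg R) (sq_nonneg _))
    rw [abs_neg, abs_of_nonneg h0]


lemma lower_bound (hR : 0 < R) (hr : 0 ≤ r) {t : ℝ} (ht : 0 < t)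
    {γ : ℝ → ℝ} (hγ : Admissible R r t γ) : Phi R r t ≤ γ t := by
  obtain ⟨h0, g, hint, hrep, hbd⟩ := hγ
  have hπ := Real.pi_pos
  set C : ℝ := 2 * Real.pi * R + 1 with hCdef
  have hC : 0 < C := by positivity
  have hprim : ContinuousOn (fun s => ∫ τ in (0:ℝ)..s, g τ) (Set.Icc 0 t) := by
    have h := intervalIntegral.continuousOn_primitive_interval
      (a := (0:ℝ)) (b := t) (μ := volume) (f := g) (by rwa [Set.uIcc_of_le ht.le])
    rwa [Set.uIcc_of_le ht.le] at h
  have hγcont : ContinuousOn γ (Set.Icc 0 t) := by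
    refine ContinuousOn.congr (f := fun s => r + ∫ τ in (0:ℝ)..s, g τ)
      (continuousOn_const.add hprim) ?_
    intro s hs; exact hrep s hs
  have hmc : Continuous fun x : ℝ => Real.pi * min (R ^ 2) (x ^ 2) :=
    continuous_const.mul (continuous_const.min (continuous_pow 2))
  have key : ∀ ε : ℝ, 0 < ε → ∀ s ∈ Set.Icc (0:ℝ) t,
      Phi R r s - ε * Real.exp (C * s) ≤ γ s := by
    intro ε hε
    by_contra hcon
    push_neg at hcon
    obtain ⟨sb, hsbmem, hsb⟩ := hcon
    set ψ : ℝ → ℝ := fun u => Phi R r u - ε * Real.exp (C * u) with hψdef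
    set B : Set ℝ := {u | u ∈ Set.Icc (0:ℝ) t ∧ γ u < ψ u} with hBdef
    have hBne : B.Nonempty := ⟨sb, hsbmem, hsb⟩
    have hBdd : BddBelow B := ⟨0, fun b hb => hb.1.1⟩
    set S : ℝ := sInf B with hSdef
    have hS0 : 0 ≤ S := le_csInf hBne fun b hb => hb.1.1
    have hSle : S ≤ t := by
      obtain ⟨b, hb⟩ := hBne
      exact le_trans (csInf_le hBdd hb) hb.1.2
    have hSmem : S ∈ Set.Icc (0:ℝ) t := ⟨hS0, hSle⟩
    have hexpc : Continuous fun u : ℝ => ε * Real.exp (C * u) :=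
      continuous_const.mul (Real.continuous_exp.comp (continuous_const.mul continuous_id))
    have hψcont : ContinuousOn ψ (Set.Icc (0:ℝ) t) :=
      ((phi_cont hR hr).mono (fun x hx => hx.1)).sub hexpc.continuousOn
    have hnotlt : ∀ u ∈ Set.Icc (0:ℝ) t, u < S → ψ u ≤ γ u := by
      intro u hu hult
      by_contra hlt
      push_neg at hlt
      exact absurd (csInf_le hBdd ⟨hu, hlt⟩) (not_le.2 hult)
    have hcγψ : ContinuousOn (fun u => γ u - ψ u) (Set.Icc (0:ℝ) t) := hγcont.sub hψcont
    have hle1 : γ S ≤ ψ S := by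
      by_contra hgt
      push_neg at hgt
      have hev : ∀ᶠ u in nhdsWithin S (Set.Icc (0:ℝ) t), 0 < γ u - ψ u :=
        (hcγψ S hSmem).eventually (eventually_gt_nhds (by simpa using sub_pos.2 hgt))
      obtain ⟨δ, hδ, hball⟩ := Metric.mem_nhdsWithin_iff.1 hev
      obtain ⟨b, hbB, hblt⟩ := exists_lt_of_csInf_lt hBne (lt_add_of_pos_right S hδ)
      have hbS : S ≤ b := csInf_le hBdd hbB
      have hmemb : b ∈ Metric.ball S δ := by
        rw [Metric.mem_ball, Real.dist_eq, abs_of_nonneg (by linarith)]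
        linarith
      have h1 : 0 < γ b - ψ b := hball ⟨hmemb, hbB.1⟩
      have h2 := hbB.2
      linarith
    have hSpos : 0 < S := by
      rcases eq_or_lt_of_le hS0 with h | h
      · exfalso
        have hψ0 : ψ 0 = r - ε := by
          simp [hψdef, phi_zero hR hr]
        rw [← h] at hle1
        rw [h0, hψ0] at hle1
        linarith
      · exact h
    have hge1 : ψ S ≤ γ S := by
      by_contra hgt
      push_neg at hgt
      have hev : ∀ᶠ u in nhdsWithin S (Set.Icc (0:ℝ) t), γ u - ψ u < 0 :=
        (hcγψ S hSmem).eventually (eventually_lt_nhds (by simpa using sub_neg.2 hgt))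
      obtain ⟨δ, hδ, hball⟩ := Metric.mem_nhdsWithin_iff.1 hev
      set u : ℝ := max 0 (S - δ/2) with hudef
      have hu0 : 0 ≤ u := le_max_left _ _
      have huS : u < S := max_lt hSpos (by linarith)
      have humem : u ∈ Set.Icc (0:ℝ) t := ⟨hu0, by linarith⟩
      have hu2 : S - δ/2 ≤ u := le_max_right _ _
      have hmemu : u ∈ Metric.ball S δ := by
        rw [Metric.mem_ball, Real.dist_eq, abs_of_nonpos (by linarith)]
        linarith
      have h1 : γ u - ψ u < 0 := hball ⟨hmemu, humem⟩
      have h2 := hnotlt u humem huS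
      linarith
    have heq : γ S = ψ S := le_antisymm hle1 hge1
    have hE : 0 < Real.exp (C * S) := Real.exp_pos _
    have hkey : Real.pi * min (R ^ 2) ((γ S) ^ 2)
        < Real.pi * min (R ^ 2) ((Phi R r S) ^ 2) + ε * C * Real.exp (C * S) := by
      have hlip := min_lip hR.le (γ S) (Phi R r S)
      have habs : |γ S - Phi R r S| = ε * Real.exp (C * S) := by
        rw [heq]
        simp only [hψdef]
        rw [sub_sub_cancel_left, abs_neg, abs_of_nonneg (by positivity)]
      rw [habs] at hlip
      nlinarith [mul_le_mul_of_nonneg_left hlip hπ.le, mul_pos hε hE]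
    set F : ℝ → ℝ := fun u => Real.pi * min (R ^ 2) ((Phi R r u) ^ 2)
        + ε * C * Real.exp (C * u) - Real.pi * min (R ^ 2) ((γ u) ^ 2) with hFdef
    have hFcont : ContinuousOn F (Set.Icc (0:ℝ) t) :=
      (((hmc.comp_continuousOn ((phi_cont hR hr).mono fun x hx => hx.1)).add
        ((continuous_const.mul (Real.continuous_exp.comp
          (continuous_const.mul continuous_id))).continuousOn)).sub
        (hmc.comp_continuousOn hγcont))
    have hFS : 0 < F S := by
      simp only [hFdef]
      linarith
    have hev2 : ∀ᶠ u in nhdsWithin S (Set.Icc (0:ℝ) t), F S / 2 < F u :=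
      (hFcont S hSmem).eventually (eventually_gt_nhds (by linarith))
    obtain ⟨δ, hδ, hball2⟩ := Metric.mem_nhdsWithin_iff.1 hev2
    obtain ⟨s₁, hs₁B, hs₁lt⟩ := exists_lt_of_csInf_lt hBne (lt_add_of_pos_right S hδ)
    have hSs₁ : S ≤ s₁ := csInf_le hBdd hs₁B
    have hs₁mem : s₁ ∈ Set.Icc (0:ℝ) t := hs₁B.1
    have hFpos : ∀ u ∈ Set.Icc S s₁, F S / 2 ≤ F u := by
      intro u hu
      have humem : u ∈ Set.Icc (0:ℝ) t := ⟨le_trans hS0 hu.1, le_trans hu.2 hs₁mem.2⟩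
      have hmemu : u ∈ Metric.ball S δ := by
        rw [Metric.mem_ball, Real.dist_eq, abs_of_nonneg (by linarith [hu.1])]
        linarith [hu.2]
      exact (hball2 ⟨hmemu, humem⟩).le
    have hSneq : S < s₁ := by
      rcases eq_or_lt_of_le hSs₁ with h | h
      · exfalso
        have h2 := hs₁B.2
        rw [← h, heq] at h2
        exact lt_irrefl _ h2
      · exact h
    have huIcc : Set.uIcc S s₁ = Set.Icc S s₁ := Set.uIcc_of_le hSs₁
    have hsubIcc : Set.Icc S s₁ ⊆ Set.Icc (0:ℝ) t := Set.Icc_subset_Icc hS0 hs₁mem.2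
    have hgi : ∀ a b : ℝ, a ∈ Set.Icc (0:ℝ) t → b ∈ Set.Icc (0:ℝ) t →
        IntervalIntegrable g volume a b := fun a b ha hb =>
      (hint.mono_set (Set.uIcc_subset_Icc ha hb)).intervalIntegrable
    have hγdiff : γ s₁ - γ S = ∫ τ in S..s₁, g τ := by
      have h := integral_interval_sub_left
        (hgi 0 s₁ (Set.left_mem_Icc.2 ht.le) hs₁mem)
        (hgi 0 S (Set.left_mem_Icc.2 ht.le) hSmem)
      rw [hrep s₁ hs₁mem, hrep S hSmem, ← h]
      ring
    set dψ : ℝ → ℝ := fun u => -(Real.pi * min (R ^ 2) ((Phi R r u) ^ 2))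
        - ε * C * Real.exp (C * u) with hdψdef
    have hψd : ∀ u ∈ Set.uIcc S s₁, HasDerivAt ψ (dψ u) u := by
      intro u hu
      rw [huIcc] at hu
      have hu0 : 0 ≤ u := le_trans hS0 hu.1
      have h1 := phi_hasDeriv hR hr hu0
      have h2 : HasDerivAt (fun v => ε * Real.exp (C * v)) (ε * C * Real.exp (C * u)) u := by
        have h3 := ((Real.hasDerivAt_exp (C * u)).comp u
          ((hasDerivAt_id u).const_mul C)).const_mul ε
        have h5 : HasDerivAt (fun y => ε * Real.exp (C * y))
            (ε * (Real.exp (C * u) * C)) u := by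
          simpa [Function.comp] using h3
        convert h5 using 1
        ring
      exact h1.sub h2
    have hdψcont : ContinuousOn dψ (Set.uIcc S s₁) := by
      rw [huIcc]
      refine ContinuousOn.sub ?_ ?_
      · exact (hmc.comp_continuousOn ((phi_cont hR hr).mono
          (fun x hx => le_trans hS0 hx.1))).neg
      · exact (continuous_const.mul (Real.continuous_exp.comp
          (continuous_const.mul continuous_id))).continuousOn
    have hψdiff : ψ s₁ - ψ S = ∫ τ in S..s₁, dψ τ :=
      (integral_eq_sub_of_hasDerivAt hψd hdψcont.intervalIntegrable).symm
    have hmγcont : ContinuousOn (fun u => -(Real.pi * min (R ^ 2) ((γ u) ^ 2)))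
        (Set.Icc (0:ℝ) t) := (hmc.comp_continuousOn hγcont).neg
    have hmγi : IntervalIntegrable (fun u => -(Real.pi * min (R ^ 2) ((γ u) ^ 2)))
        volume S s₁ := ((hmγcont.mono hsubIcc).mono (le_of_eq huIcc)).intervalIntegrable
    have hgi2 : IntervalIntegrable g volume S s₁ := hgi S s₁ hSmem hs₁mem
    have hmono : (∫ τ in S..s₁, -(Real.pi * min (R ^ 2) ((γ τ) ^ 2))) ≤ ∫ τ in S..s₁, g τ := by
      refine integral_mono_ae_restrict hSs₁ hmγi hgi2 ?_
      have hae := ae_restrict_of_ae_restrict_of_subset hsubIcc hbd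
      filter_upwards [hae] with u hu
      have := neg_abs_le (g u)
      linarith
    have hFi : IntervalIntegrable F volume S s₁ :=
      ((hFcont.mono hsubIcc).mono (le_of_eq huIcc)).intervalIntegrable
    have hdψi : IntervalIntegrable dψ volume S s₁ := hdψcont.intervalIntegrable
    have hFint : (s₁ - S) * (F S / 2) ≤ ∫ τ in S..s₁, F τ := by
      have hci : IntervalIntegrable (fun _ : ℝ => F S / 2) volume S s₁ :=
        intervalIntegrable_const
      have h := integral_mono_on hSs₁ hci hFi hFpos
      rwa [intervalIntegral.integral_const, smul_eq_mul] at h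
    have hsplit : (∫ τ in S..s₁, dψ τ)
        - (∫ τ in S..s₁, -(Real.pi * min (R ^ 2) ((γ τ) ^ 2)))
        = - ∫ τ in S..s₁, F τ := by
      rw [← integral_sub hdψi hmγi, ← intervalIntegral.integral_neg]
      apply integral_congr
      intro τ _
      simp only [hdψdef, hFdef]
      ring
    have h1 : γ s₁ - γ S < ψ s₁ - ψ S := by
      have h2 := hs₁B.2
      rw [heq]
      linarith
    have hpos2 : (0:ℝ) < (s₁ - S) * (F S / 2) :=
      mul_pos (by linarith) (by linarith)
    linarith [hγdiff, hψdiff, hmono, hFint, hsplit, hpos2, h1]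
  have hfin : ∀ ε : ℝ, 0 < ε → Phi R r t ≤ γ t + ε := by
    intro ε hε
    have hexp : 0 < Real.exp (C * t) := Real.exp_pos _
    have h := key (ε / Real.exp (C * t)) (by positivity) t ⟨ht.le, le_rfl⟩
    have hcalc : ε / Real.exp (C * t) * Real.exp (C * t) = ε :=
      div_mul_cancel₀ ε hexp.ne'
    linarith
  exact le_of_forall_pos_le_add hfin

end Ex51

/-- Example 5.1 of the paper: the infimum of the endpoints `γ(t)` over all admissible
trajectories starting from `r` equals `Φ(r,t)`, and the infimum is attained. -/
theorem stmt_15 (R t r : ℝ) (hR : 0 < R) (ht : 0 < t) (hr : 0 ≤ r) :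
    sInf {v : ℝ | ∃ γ : ℝ → ℝ, Admissible R r t γ ∧ v = γ t} = Phi R r t ∧
    ∃ γ : ℝ → ℝ, Admissible R r t γ ∧ γ t = Phi R r t := by
  have hadm := Ex51.phi_admissible hR hr ht
  have hmem : Phi R r t ∈ {v : ℝ | ∃ γ : ℝ → ℝ, Admissible R r t γ ∧ v = γ t} :=
    ⟨fun s => Phi R r s, hadm, rfl⟩
  have hlb : ∀ v ∈ {v : ℝ | ∃ γ : ℝ → ℝ, Admissible R r t γ ∧ v = γ t},
      Phi R r t ≤ v := by
    rintro v ⟨γ, hγ, rfl⟩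
    exact Ex51.lower_bound hR hr ht hγ
  refine ⟨le_antisymm (csInf_le ⟨Phi R r t, fun v hv => hlb v hv⟩ hmem)
    (le_csInf ⟨Phi R r t, hmem⟩ hlb), fun s => Phi R r s, hadm, rfl⟩
end

section
/- Let t > 0 and q ≥ 1. Then the function h(r) = ( r/(1 + π r t) + 1 )^{1/q} is strictly concave on [0,∞), and consequently, for every ρ > 0, the function g : ℝ² → ℝ defined by g(x) = ( |x|/(1 + π|x| t) + 1 )^{1/q} is not convex on the open ball { x ∈ ℝ² : |x| < ρ }. -/
/-!
The map `r ↦ r / (1 + c r)` is strictly concave on `[0, ∞)` for `c > 0`, and composing a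
nonnegative strictly concave function with the concave, strictly increasing map `s ↦ s ^ (1/q)`
keeps it strictly concave. A function `x ↦ h ‖x‖` with `h` strictly concave cannot be convex near
the origin: at the midpoint of `0` and any `e ≠ 0`, convexity gives
`h (‖e‖ / 2) ≤ (h 0 + h ‖e‖) / 2`, while strict concavity of `h` gives the reverse strict
inequality.
-/

open Set Metric

lemma strictConcaveOn_div_one_add_mul {c : ℝ} (hc : 0 < c) :
    StrictConcaveOn ℝ (Ici 0) (fun r : ℝ => r / (1 + c * r)) := by
  refine ⟨convex_Ici 0, fun x (hx : 0 ≤ x) y (hy : 0 ≤ y) hxy a b ha hb hab => ?_⟩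
  have hDx : 0 < 1 + c * x := by positivity
  have hDy : 0 < 1 + c * y := by positivity
  have hD : 0 < 1 + c * (a * x + b * y) := by positivity
  simp only [smul_eq_mul]
  rw [mul_div_assoc', mul_div_assoc', div_add_div _ _ hDx.ne' hDy.ne',
    div_lt_div_iff₀ (by positivity) hD]
  obtain rfl : b = 1 - a := by linarith
  -- the two sides differ by `a (1 - a) c (x - y)²`
  have hgap : 0 < a * (1 - a) * c * (x - y) ^ 2 := by
    have : x - y ≠ 0 := sub_ne_zero.mpr hxy
    positivity
  nlinarith

lemma StrictConcaveOn.rpow {E : Type*} [AddCommGroup E] [Module ℝ E] {s : Set E} {f : E → ℝ}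
    (hf : StrictConcaveOn ℝ s f) (hf₀ : ∀ x ∈ s, 0 ≤ f x) {p : ℝ} (hp₀ : 0 < p) (hp₁ : p ≤ 1) :
    StrictConcaveOn ℝ s (fun x => f x ^ p) := by
  refine ⟨hf.1, fun x hx y hy hxy a b ha hb hab => ?_⟩
  have hcomb₀ : 0 ≤ a • f x + b • f y := by
    simp only [smul_eq_mul]
    have := hf₀ x hx; have := hf₀ y hy
    positivity
  calc a • f x ^ p + b • f y ^ p ≤ (a • f x + b • f y) ^ p :=
        (Real.concaveOn_rpow hp₀.le hp₁).2 (hf₀ x hx) (hf₀ y hy) ha.le hb.le hab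
    _ < f (a • x + b • y) ^ p := Real.rpow_lt_rpow hcomb₀ (hf.2 hx hy hxy ha hb hab) hp₀

lemma not_convexOn_ball_comp_norm {E : Type*} [NormedAddCommGroup E] [NormedSpace ℝ E]
    [Nontrivial E] {h : ℝ → ℝ} (hh : StrictConcaveOn ℝ (Ici 0) h) {ρ : ℝ} (hρ : 0 < ρ) :
    ¬ ConvexOn ℝ (ball (0 : E) ρ) (fun x => h ‖x‖) := by
  intro hconv
  obtain ⟨e, he⟩ := exists_norm_eq E (half_pos hρ).le
  have hzero_mem : (0 : E) ∈ ball 0 ρ := mem_ball_self hρ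
  have he_mem : e ∈ ball (0 : E) ρ := by
    rw [mem_ball_zero_iff, he]
    linarith
  have hconvex := hconv.2 hzero_mem he_mem (by norm_num : (0 : ℝ) ≤ 1 / 2)
    (by norm_num : (0 : ℝ) ≤ 1 / 2) (by norm_num)
  have hstrict := hh.2 (mem_Ici.mpr le_rfl) (mem_Ici.mpr (norm_nonneg e))
    (he ▸ (half_pos hρ).ne) (by norm_num : (0 : ℝ) < 1 / 2) (by norm_num : (0 : ℝ) < 1 / 2)
    (by norm_num)
  have hmid : ‖(1 / 2 : ℝ) • (0 : E) + (1 / 2 : ℝ) • e‖ =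
      (1 / 2 : ℝ) • (0 : ℝ) + (1 / 2 : ℝ) • ‖e‖ := by
    simp [norm_smul]
  simp only [hmid, norm_zero] at hconvex
  exact hconvex.not_gt hstrict

/-- The non-convexity claim of Example 5.1: for `t > 0` and `q ≥ 1` the function
`h(r) = (r/(1+πrt) + 1)^{1/q}` is strictly concave on `[0,∞)`, and consequently
`x ↦ (|x|/(1+π|x|t) + 1)^{1/q}` is not convex on any ball `{|x| < ρ}` in `ℝ²`. -/
theorem stmt_17 (t q : ℝ) (ht : 0 < t) (hq : 1 ≤ q) :
    StrictConcaveOn ℝ (Set.Ici (0 : ℝ))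
      (fun r : ℝ => (r / (1 + Real.pi * r * t) + 1) ^ (1 / q)) ∧
    ∀ ρ : ℝ, 0 < ρ →
      ¬ ConvexOn ℝ (Metric.ball (0 : EuclideanSpace ℝ (Fin 2)) ρ)
        (fun x : EuclideanSpace ℝ (Fin 2) =>
          (‖x‖ / (1 + Real.pi * ‖x‖ * t) + 1) ^ (1 / q)) := by
  have hdiv : StrictConcaveOn ℝ (Ici 0) (fun r : ℝ => r / (1 + Real.pi * r * t)) := by
    simpa only [mul_right_comm Real.pi] using
      strictConcaveOn_div_one_add_mul (by positivity : 0 < Real.pi * t)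
  have hh : StrictConcaveOn ℝ (Ici 0) (fun r : ℝ => (r / (1 + Real.pi * r * t) + 1) ^ (1 / q)) :=
    (hdiv.add_const 1).rpow (fun r (hr : 0 ≤ r) =>
      add_nonneg (div_nonneg hr (by positivity)) zero_le_one) (by positivity)
      ((div_le_one (by linarith)).mpr hq)
  exact ⟨hh, fun ρ hρ => not_convexOn_ball_comp_norm hh hρ⟩
end
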